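/- arXiv:1710.03385 — 9 statements merged into one kernel-verified Lean document; each statement's English description precedes it below -/
import Mathlib

section
/- There exists a unique strictly increasing bijection h : [0, ∞) → [0, 1) such that h(x + 1) = (1 + h(x))/2 and h(x/(x + 1)) = h(x)/2 for all x ≥ 0; moreover this h is a homeomorphism from [0, ∞) onto [0, 1) and satisfies h(0) = 0. -/
/-!
Let `farey` invert `x ↦ x + 1` on `[1, ∞)` and `x ↦ x / (x + 1)` on `[0, 1)`, and let `digit x`
be `1` or `0` according as `x ≥ 1` or not. The two functional equations together say
`h x = (digit x + h (farey x)) / 2`; for a bounded `h` this contracting equation has only one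
solution, `questionMark x = ∑ digit (farey^[n] x) / 2 ^ (n + 1)`. This series is strictly
increasing because distinct points have distinct digit sequences: `farey` expands distances on
`[0, 1)`, and every orbit returns to `[0, 1)` infinitely often. Its range is closed under
`t ↦ t / 2` and `t ↦ (1 + t) / 2`, hence dense in `[0, 1)`; a monotone map with dense range
is continuous, so the range is also order-connected, i.e. everything. A strictly increasing
bijection is an order isomorphism, hence a homeomorphism, and `h 0 = h 0 / 2` gives `h 0 = 0`.
-/

open Set

/-- The property of being a strictly increasing bijection from `[0,∞)` to `[0,1)`
conjugating the pair `x ↦ x+1`, `x ↦ x/(x+1)` to the pair `t ↦ (1+t)/2`, `t ↦ t/2`. -/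
def MinkowskiLike (h : Set.Ici (0:ℝ) → Set.Ico (0:ℝ) 1) : Prop :=
  StrictMono h ∧ Function.Bijective h ∧
  (∀ (x : ℝ) (hx : 0 ≤ x),
    (h ⟨x + 1, Set.mem_Ici.mpr (by linarith)⟩ : ℝ) = (1 + (h ⟨x, Set.mem_Ici.mpr hx⟩ : ℝ)) / 2 ∧
    (h ⟨x / (x + 1), Set.mem_Ici.mpr (div_nonneg hx (by linarith))⟩ : ℝ) =
      (h ⟨x, Set.mem_Ici.mpr hx⟩ : ℝ) / 2)

open Filter Topology

lemma StrictMono.isHomeomorph_of_surjective {α β : Type*} [LinearOrder α] [TopologicalSpace α]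
    [OrderTopology α] [LinearOrder β] [TopologicalSpace β] [OrderTopology β] {f : α → β}
    (hf : StrictMono f) (hsurj : Function.Surjective f) : IsHomeomorph f :=
  isHomeomorph_iff_exists_homeomorph.2 ⟨(hf.orderIsoOfSurjective f hsurj).toHomeomorph, rfl⟩

lemma eqOn_zero_of_eq_half {α : Type*} {T : α → α} {s : Set α} (hT : MapsTo T s s) {f : α → ℝ}
    {C : ℝ} (hC : ∀ x ∈ s, |f x| ≤ C) (hf : ∀ x ∈ s, f x = f (T x) / 2) : EqOn f 0 s := by
  have hbound (n : ℕ) : ∀ x ∈ s, |f x| ≤ C * (1 / 2) ^ n := by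
    induction n with
    | zero => simpa using hC
    | succ n ih =>
      intro x hx
      rw [hf x hx, abs_div, abs_two, pow_succ]
      linarith [ih _ (hT hx)]
  have hlim : Tendsto (fun n : ℕ ↦ C * (1 / 2) ^ n) atTop (𝓝 0) := by
    simpa using (tendsto_pow_atTop_nhds_zero_of_lt_one (by norm_num) one_half_lt_one).const_mul C
  exact fun x hx ↦ abs_nonpos_iff.1 (ge_of_tendsto' hlim fun n ↦ hbound n x hx)

namespace MinkowskiQuestionMark

noncomputable def farey (x : ℝ) : ℝ := if 1 ≤ x then x - 1 else x / (1 - x)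

noncomputable def digit (x : ℝ) : ℝ := if 1 ≤ x then 1 else 0

noncomputable def questionMark (x : ℝ) : ℝ := ∑' n, digit (farey^[n] x) / 2 ^ (n + 1)

variable {x y : ℝ}

section Farey

lemma farey_of_one_le (hx : 1 ≤ x) : farey x = x - 1 := if_pos hx

lemma farey_of_lt_one (hx : x < 1) : farey x = x / (1 - x) := if_neg hx.not_ge

lemma farey_nonneg (hx : 0 ≤ x) : 0 ≤ farey x := by
  unfold farey
  split_ifs
  · linarith
  · exact div_nonneg hx (by linarith)

lemma iterate_farey_nonneg (hx : 0 ≤ x) (n : ℕ) : 0 ≤ farey^[n] x := by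
  induction n with
  | zero => exact hx
  | succ n ih => rw [Function.iterate_succ_apply']; exact farey_nonneg ih

lemma div_add_one_lt_one (hx : 0 ≤ x) : x / (x + 1) < 1 :=
  (div_lt_one (by linarith)).2 (by linarith)

lemma farey_add_one (hx : 0 ≤ x) : farey (x + 1) = x := by
  rw [farey_of_one_le (by linarith), add_sub_cancel_right]

lemma farey_div_add_one (hx : 0 ≤ x) : farey (x / (x + 1)) = x := by
  rw [farey_of_lt_one (div_add_one_lt_one hx)]
  field_simp
  ring

lemma farey_add_one_of_one_le (hx : 1 ≤ x) : farey x + 1 = x := by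
  rw [farey_of_one_le hx, sub_add_cancel]

lemma farey_div_farey_add_one (hx : x < 1) : farey x / (farey x + 1) = x := by
  rw [farey_of_lt_one hx]
  field_simp [(sub_pos.2 hx).ne']
  ring

lemma exists_iterate_farey_lt_one (x : ℝ) (N : ℕ) : ∃ n, N ≤ n ∧ farey^[n] x < 1 := by
  by_contra! hge
  have hsub (k : ℕ) : farey^[N + k] x = farey^[N] x - k := by
    induction k with
    | zero => simp
    | succ k ih =>
      rw [← add_assoc, Function.iterate_succ_apply', farey_of_one_le (hge _ (by omega)), ih]
      push_cast
      ring
  obtain ⟨k, hk⟩ := exists_nat_gt (farey^[N] x)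
  linarith [hsub k, hge (N + k) (by omega)]

lemma digit_nonneg (x : ℝ) : 0 ≤ digit x := by unfold digit; split_ifs <;> norm_num

lemma digit_le_one (x : ℝ) : digit x ≤ 1 := by unfold digit; split_ifs <;> norm_num

lemma digit_ne_digit_iff (hxy : x ≤ y) : digit x ≠ digit y ↔ x < 1 ∧ 1 ≤ y := by
  by_cases hx : 1 ≤ x
  · simp [digit, hx, hx.trans hxy, not_lt.2 hx]
  · by_cases hy : 1 ≤ y <;> simp [digit, hx, hy, not_le.1 hx]

lemma lt_one_of_digit_eq (hxy : x ≤ y) (hx : x < 1) (hd : digit x = digit y) : y < 1 :=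
  not_le.1 fun hy ↦ (digit_ne_digit_iff hxy).2 ⟨hx, hy⟩ hd

lemma farey_lt_farey (hxy : x < y) (hd : digit x = digit y) : farey x < farey y := by
  by_cases hx : 1 ≤ x
  · rw [farey_of_one_le hx, farey_of_one_le (hx.trans hxy.le)]
    linarith
  · have hy := lt_one_of_digit_eq hxy.le (not_le.1 hx) hd
    rw [farey_of_lt_one (not_le.1 hx), farey_of_lt_one hy,
      div_lt_div_iff₀ (by linarith) (by linarith)]
    nlinarith

lemma inv_farey_sub_farey_le (hx : 0 ≤ x) (hxy : x < y) (hd : digit x = digit y) :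
    (farey y - farey x)⁻¹ ≤ (y - x)⁻¹ - (1 - digit y) := by
  by_cases hx₁ : 1 ≤ x
  · have hy : 1 ≤ y := hx₁.trans hxy.le
    rw [farey_of_one_le hx₁, farey_of_one_le hy, digit, if_pos hy, sub_sub_sub_cancel_right,
      sub_self, sub_zero]
  · have hy := lt_one_of_digit_eq hxy.le (not_le.1 hx₁) hd
    have hsub : farey y - farey x = (y - x) / ((1 - x) * (1 - y)) := by
      rw [farey_of_lt_one (not_le.1 hx₁), farey_of_lt_one hy,
        div_sub_div _ _ (by linarith) (by linarith)]
      ring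
    have hinv : (y - x)⁻¹ - 1 = (1 - (y - x)) / (y - x) := by field_simp [(sub_pos.2 hxy).ne']
    rw [hsub, inv_div, digit, if_neg hy.not_ge, sub_zero, hinv,
      div_le_div_iff_of_pos_right (by linarith)]
    nlinarith

end Farey

section QuestionMark

lemma digit_div_pow_le (x : ℝ) (n : ℕ) : digit (farey^[n] x) / 2 ^ (n + 1) ≤ 1 / 2 / 2 ^ n := by
  rw [div_div, ← pow_succ']
  gcongr
  exact digit_le_one _

lemma summable_digit_div_pow (x : ℝ) : Summable fun n ↦ digit (farey^[n] x) / 2 ^ (n + 1) :=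
  .of_nonneg_of_le (fun n ↦ by have := digit_nonneg (farey^[n] x); positivity)
    (digit_div_pow_le x) (summable_geometric_two' 1)

lemma questionMark_eq_digit_add (x : ℝ) :
    questionMark x = (digit x + questionMark (farey x)) / 2 := by
  rw [questionMark, (summable_digit_div_pow x).tsum_eq_zero_add, questionMark, add_div,
    ← tsum_div_const]
  congr 1
  · simp
  · congr 1 with n
    rw [Function.iterate_succ_apply, pow_succ _ (n + 1), div_div]

lemma questionMark_nonneg (x : ℝ) : 0 ≤ questionMark x :=
  tsum_nonneg fun n ↦ by have := digit_nonneg (farey^[n] x); positivity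

/-- The binary expansion has infinitely many zero digits, so it is not `0.111…`. -/
lemma questionMark_lt_one (x : ℝ) : questionMark x < 1 := by
  obtain ⟨j, -, hj⟩ := exists_iterate_farey_lt_one x 0
  calc questionMark x < ∑' n : ℕ, 1 / 2 / 2 ^ n := by
        refine (summable_digit_div_pow x).tsum_lt_tsum (i := j) (digit_div_pow_le x) ?_
          (summable_geometric_two' 1)
        rw [digit, if_neg hj.not_ge, zero_div]
        positivity
    _ = 1 := tsum_geometric_two' 1

lemma questionMark_add_one (hx : 0 ≤ x) : questionMark (x + 1) = (1 + questionMark x) / 2 := by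
  rw [questionMark_eq_digit_add, digit, if_pos (by linarith), farey_add_one hx]

lemma questionMark_div_add_one (hx : 0 ≤ x) :
    questionMark (x / (x + 1)) = questionMark x / 2 := by
  rw [questionMark_eq_digit_add, digit, if_neg (div_add_one_lt_one hx).not_ge,
    farey_div_add_one hx, zero_add]

lemma questionMark_zero : questionMark 0 = 0 := by
  have h := questionMark_div_add_one le_rfl
  rw [zero_div] at h
  linarith

lemma questionMark_lt_of_lt_one_of_one_le (hx : x < 1) (hy : 1 ≤ y) :
    questionMark x < questionMark y := by
  rw [questionMark_eq_digit_add x, questionMark_eq_digit_add y, digit, digit, if_neg hx.not_ge,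
    if_pos hy]
  linarith [questionMark_lt_one (farey x), questionMark_nonneg (farey y)]

lemma questionMark_lt_of_digit_ne (n : ℕ) :
    ∀ {x y : ℝ}, x < y → digit (farey^[n] x) ≠ digit (farey^[n] y) →
      questionMark x < questionMark y := by
  induction n with
  | zero =>
    intro x y hxy hd
    obtain ⟨hx, hy⟩ := (digit_ne_digit_iff hxy.le).1 hd
    exact questionMark_lt_of_lt_one_of_one_le hx hy
  | succ n ih =>
    intro x y hxy hd
    by_cases h₀ : digit x = digit y
    · rw [Function.iterate_succ_apply, Function.iterate_succ_apply] at hd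
      rw [questionMark_eq_digit_add x, questionMark_eq_digit_add y, h₀]
      linarith [ih (farey_lt_farey hxy h₀) hd]
    · obtain ⟨hx, hy⟩ := (digit_ne_digit_iff hxy.le).1 h₀
      exact questionMark_lt_of_lt_one_of_one_le hx hy

/-- If all digits agreed, the gaps `farey^[n] y - farey^[n] x` would never shrink, while their
reciprocals drop by one at each of the infinitely many zero digits. -/
lemma exists_digit_ne (hx : 0 ≤ x) (hxy : x < y) :
    ∃ n, digit (farey^[n] x) ≠ digit (farey^[n] y) := by
  by_contra! hd
  have hlt (n : ℕ) : farey^[n] x < farey^[n] y := by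
    induction n with
    | zero => exact hxy
    | succ n ih =>
      rw [Function.iterate_succ_apply', Function.iterate_succ_apply']
      exact farey_lt_farey ih (hd n)
  set r : ℕ → ℝ := fun n ↦ (farey^[n] y - farey^[n] x)⁻¹ with hr
  have hr_succ (n : ℕ) : r (n + 1) ≤ r n - (1 - digit (farey^[n] y)) := by
    simp only [hr, Function.iterate_succ_apply']
    exact inv_farey_sub_farey_le (iterate_farey_nonneg hx n) (hlt n) (hd n)
  have hr_anti : Antitone r :=
    antitone_nat_of_succ_le fun n ↦ by linarith [hr_succ n, digit_le_one (farey^[n] y)]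
  have hr_drop (k : ℕ) : ∃ n, r n + k ≤ r 0 := by
    induction k with
    | zero => exact ⟨0, by simp⟩
    | succ k ih =>
      obtain ⟨n, hn⟩ := ih
      obtain ⟨m, hnm, hm⟩ := exists_iterate_farey_lt_one y n
      have hm_succ := hr_succ m
      rw [digit, if_neg hm.not_ge] at hm_succ
      exact ⟨m + 1, by push_cast; linarith [hr_anti hnm]⟩
  obtain ⟨k, hk⟩ := exists_nat_gt (r 0)
  obtain ⟨n, hn⟩ := hr_drop k
  linarith [inv_pos.2 (sub_pos.2 (hlt n))]

lemma strictMonoOn_questionMark : StrictMonoOn questionMark (Ici 0) := fun _ hx _ _ hxy ↦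
  let ⟨n, hn⟩ := exists_digit_ne hx hxy
  questionMark_lt_of_digit_ne n hxy hn

lemma exists_questionMark_le_lt_add (n : ℕ) {t : ℝ} (ht₀ : 0 ≤ t) (ht₁ : t < 1) :
    ∃ x, 0 ≤ x ∧ questionMark x ≤ t ∧ t < questionMark x + (1 / 2) ^ n := by
  induction n generalizing t with
  | zero =>
    exact ⟨0, le_rfl, by rwa [questionMark_zero], by rwa [questionMark_zero, pow_zero, zero_add]⟩
  | succ n ih =>
    rw [pow_succ]
    by_cases ht : t < 1 / 2
    · obtain ⟨x, hx, hle, hlt⟩ := ih (t := 2 * t) (by linarith) (by linarith)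
      refine ⟨x / (x + 1), div_nonneg hx (by linarith), ?_, ?_⟩ <;>
        rw [questionMark_div_add_one hx] <;> linarith
    · obtain ⟨x, hx, hle, hlt⟩ := ih (t := 2 * t - 1) (by linarith) (by linarith)
      refine ⟨x + 1, by linarith, ?_, ?_⟩ <;> rw [questionMark_add_one hx] <;> linarith

lemma eqOn_questionMark {φ : ℝ → ℝ} (hφ : ∀ x, 0 ≤ x → φ x ∈ Icc 0 1)
    (h_add_one : ∀ x, 0 ≤ x → φ (x + 1) = (1 + φ x) / 2)
    (h_div_add_one : ∀ x, 0 ≤ x → φ (x / (x + 1)) = φ x / 2) :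
    EqOn φ questionMark (Ici 0) := by
  have hstep (x : ℝ) (hx : 0 ≤ x) : φ x = (digit x + φ (farey x)) / 2 := by
    by_cases h : 1 ≤ x
    · rw [digit, if_pos h, ← h_add_one _ (farey_nonneg hx), farey_add_one_of_one_le h]
    · rw [digit, if_neg h, zero_add, ← h_div_add_one _ (farey_nonneg hx),
        farey_div_farey_add_one (not_le.1 h)]
  intro x hx
  refine sub_eq_zero.1 (eqOn_zero_of_eq_half (f := fun x ↦ φ x - questionMark x) (C := 1)
    (fun _ hx ↦ farey_nonneg hx) (fun x hx ↦ ?_) (fun x hx ↦ ?_) hx)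
  · have := hφ x hx
    exact abs_sub_le_iff.2
      ⟨by linarith [questionMark_nonneg x, this.2], by linarith [questionMark_lt_one x, this.1]⟩
  · rw [hstep x hx, questionMark_eq_digit_add x]
    ring

end QuestionMark

noncomputable def questionMarkIci (x : Ici (0 : ℝ)) : Ico (0 : ℝ) 1 :=
  ⟨questionMark x, questionMark_nonneg x, questionMark_lt_one x⟩

lemma strictMono_questionMarkIci : StrictMono questionMarkIci := fun x y hxy ↦
  strictMonoOn_questionMark x.2 y.2 hxy

lemma denseRange_questionMarkIci : DenseRange questionMarkIci := by
  refine dense_of_exists_between fun a b hab ↦ ?_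
  have hab' : (a : ℝ) < b := hab
  obtain ⟨n, hn⟩ := exists_pow_lt_of_lt_one (half_pos (sub_pos.2 hab')) one_half_lt_one
  obtain ⟨x, hx, hle, hlt⟩ := exists_questionMark_le_lt_add n (t := (a + b) / 2)
    (by linarith [a.2.1]) (by linarith [b.2.2])
  exact ⟨questionMarkIci ⟨x, hx⟩, mem_range_self _, show (a : ℝ) < questionMark x by linarith,
    show questionMark x < b by linarith⟩

/-- A monotone map with dense range is continuous, so its range is order-connected. -/
lemma surjective_questionMarkIci : Function.Surjective questionMarkIci := by
  have hcont :=
    strictMono_questionMarkIci.monotone.continuous_of_denseRange denseRange_questionMarkIci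
  have := Subtype.preconnectedSpace (isPreconnected_Ici (a := (0 : ℝ)))
  intro t
  have ht : t < ⟨(t + 1) / 2, by linarith [t.2.1], by linarith [t.2.2]⟩ :=
    show (t : ℝ) < (t + 1) / 2 by linarith [t.2.2]
  obtain ⟨_, ⟨y, rfl⟩, hty, -⟩ := denseRange_questionMarkIci.exists_between ht
  refine (isPreconnected_range hcont).Icc_subset (mem_range_self ⟨0, self_mem_Ici⟩)
    (mem_range_self y) ⟨?_, hty.le⟩
  show questionMark 0 ≤ t
  rw [questionMark_zero]
  exact t.2.1

lemma minkowskiLike_questionMarkIci : MinkowskiLike questionMarkIci :=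
  ⟨strictMono_questionMarkIci, ⟨strictMono_questionMarkIci.injective, surjective_questionMarkIci⟩,
    fun _ hx ↦ ⟨questionMark_add_one hx, questionMark_div_add_one hx⟩⟩

end MinkowskiQuestionMark

open MinkowskiQuestionMark

namespace MinkowskiLike

variable {g : Ici (0 : ℝ) → Ico (0 : ℝ) 1}

lemma eq_questionMarkIci (hg : MinkowskiLike g) : g = questionMarkIci := by
  have hext (x : ℝ) (hx : 0 ≤ x) : IciExtend (fun x ↦ (g x : ℝ)) x = g ⟨x, hx⟩ :=
    IciExtend_of_mem _ hx
  have hφ := eqOn_questionMark (φ := IciExtend fun x ↦ (g x : ℝ))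
    (fun x hx ↦ by rw [hext x hx]; exact Ico_subset_Icc_self (g ⟨x, hx⟩).2)
    (fun x hx ↦ by rw [hext x hx, hext _ (by linarith)]; exact (hg.2.2 x hx).1)
    (fun x hx ↦ by rw [hext x hx, hext _ (div_nonneg hx (by linarith))]; exact (hg.2.2 x hx).2)
  funext x
  exact Subtype.ext ((hext x x.2).symm.trans (hφ x.2))

lemma map_zero (hg : MinkowskiLike g) : (g ⟨0, self_mem_Ici⟩ : ℝ) = 0 := by
  have h := (hg.2.2 0 le_rfl).2
  simp only [zero_div] at h
  linarith

end MinkowskiLike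

/-- There is a unique strictly increasing bijection `h : [0,∞) → [0,1)` with
`h(x+1) = (1+h(x))/2` and `h(x/(x+1)) = h(x)/2`; moreover this `h` is a
homeomorphism onto `[0,1)` and satisfies `h(0) = 0`.  (Minkowski's question
mark function.) -/
theorem minkowski_question_mark :
    (∃! h : Set.Ici (0:ℝ) → Set.Ico (0:ℝ) 1, MinkowskiLike h) ∧
    (∀ h : Set.Ici (0:ℝ) → Set.Ico (0:ℝ) 1, MinkowskiLike h →
      IsHomeomorph h ∧ (h ⟨0, Set.mem_Ici.mpr le_rfl⟩ : ℝ) = 0) :=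
  ⟨⟨questionMarkIci, minkowskiLike_questionMarkIci, fun _ hg ↦ hg.eq_questionMarkIci⟩,
    fun _ hh ↦ ⟨hh.1.isHomeomorph_of_surjective hh.2.1.2, hh.map_zero⟩⟩
end

section
/- If s : ℕ → {0, 1} is a Sturmian (balanced) sequence, then the limit as n → ∞ of (1/n)·#{i < n : s_i = 1} exists. -/
open Filter Finset

/-- A sequence `s : ℕ → ℕ` with values in `{0,1}` is Sturmian (balanced) if the
numbers of `1`'s in any two blocks of the same length differ by at most one. -/
def IsSturmianSeq (s : ℕ → ℕ) : Prop :=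
  (∀ i, s i = 0 ∨ s i = 1) ∧
  ∀ (n i j : ℕ),
    |(∑ k ∈ Finset.range n, (s (i + k) : ℤ)) - ∑ k ∈ Finset.range n, (s (j + k) : ℤ)| ≤ 1

/-! The partial sums `S n` of a balanced sequence satisfy `S (m + n) ≤ S m + S n + 1`, since the
block of length `n` starting at `m` has at most one more `1` than the initial one. So `S + 1` is
subadditive and Fekete's lemma gives the limit of `S n / n`. -/

theorem exists_tendsto_div_of_le_add_add {S : ℕ → ℝ} {C : ℝ} (hS : ∀ n, -C ≤ S n)
    (hsub : ∀ m n, S (m + n) ≤ S m + S n + C) :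
    ∃ θ : ℝ, Tendsto (fun n : ℕ => S n / n) atTop (nhds θ) := by
  have hu : Subadditive (fun n => S n + C) := fun m n => by linarith [hsub m n]
  have hbdd : BddBelow (Set.range fun n : ℕ => (S n + C) / n) :=
    ⟨0, by rintro _ ⟨n, rfl⟩; exact div_nonneg (by linarith [hS n]) n.cast_nonneg⟩
  refine ⟨hu.lim, ?_⟩
  have hlim := (hu.tendsto_lim hbdd).sub (tendsto_const_div_atTop_nhds_zero_nat C)
  rw [sub_zero] at hlim
  refine hlim.congr' ?_
  filter_upwards [eventually_ne_atTop 0] with n hn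
  field_simp
  ring

theorem IsSturmianSeq.sum_range_add_le {s : ℕ → ℕ} (hs : IsSturmianSeq s) (m n : ℕ) :
    ∑ k ∈ range (m + n), (s k : ℝ) ≤ ∑ k ∈ range m, (s k : ℝ) + ∑ k ∈ range n, (s k : ℝ) + 1 := by
  have hblock : ∑ k ∈ range n, (s (m + k) : ℤ) - ∑ k ∈ range n, (s (0 + k) : ℤ) ≤ 1 :=
    (le_abs_self _).trans (hs.2 n m 0)
  simp only [zero_add] at hblock
  rw [sum_range_add]
  exact_mod_cast (by linarith : ∑ k ∈ range m, (s k : ℤ) + ∑ k ∈ range n, (s (m + k) : ℤ) ≤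
    ∑ k ∈ range m, (s k : ℤ) + ∑ k ∈ range n, (s k : ℤ) + 1)

theorem card_filter_eq_one_eq_sum {s : ℕ → ℕ} (h01 : ∀ i, s i = 0 ∨ s i = 1) (n : ℕ) :
    #{i ∈ range n | s i = 1} = ∑ k ∈ range n, s k := by
  rw [card_filter]
  refine sum_congr rfl fun i _ => ?_
  rcases h01 i with h | h <;> simp [h]

/-- For a Sturmian (balanced) sequence, the limiting frequency
`lim (1/n)·#{i < n : s i = 1}` of `1`'s exists.
This limit is the rotation number of the sequence. -/
theorem sturmian_frequency_exists (s : ℕ → ℕ) (hs : IsSturmianSeq s) :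
    ∃ θ : ℝ, Tendsto
      (fun n : ℕ => (((Finset.range n).filter (fun i => s i = 1)).card : ℝ) / n)
      atTop (nhds θ) := by
  have hsum_ge (n : ℕ) : -1 ≤ ∑ k ∈ range n, (s k : ℝ) := by
    linarith [sum_nonneg fun k (_ : k ∈ range n) => Nat.cast_nonneg (α := ℝ) (s k)]
  obtain ⟨θ, hθ⟩ := exists_tendsto_div_of_le_add_add hsum_ge hs.sum_range_add_le
  refine ⟨θ, hθ.congr fun n => ?_⟩
  rw [card_filter_eq_one_eq_sum hs.1]
  push_cast
  rfl
end

section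
/- For every pair of coprime integers p, q with 0 < p < q, there exists a function w : ℤ/qℤ → {0, 1} taking the value 1 at exactly p residues such that the q-periodic bi-infinite sequence (w(i mod q))_{i ∈ ℤ} is Sturmian; moreover w is unique up to cyclic permutation, i.e., any two such functions differ by precomposition with a translation of ℤ/qℤ. -/
open Finset

/-- A bi-infinite sequence `s : ℤ → ℕ` with values in `{0,1}` is Sturmian
(balanced) if the numbers of `1`'s in any two blocks of the same length differ
by at most one. -/
def IsSturmianBiSeq (s : ℤ → ℕ) : Prop :=
  (∀ i, s i = 0 ∨ s i = 1) ∧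
  ∀ (n : ℕ) (i j : ℤ),
    |(∑ k ∈ Finset.range n, (s (i + k) : ℤ)) - ∑ k ∈ Finset.range n, (s (j + k) : ℤ)| ≤ 1

/-- `w : ZMod q → ℕ` is a Sturmian word with exactly `p` ones: it takes values in
`{0,1}`, the value `1` is taken at exactly `p` residues, and the `q`-periodic
bi-infinite sequence `i ↦ w (i mod q)` is Sturmian. -/
def IsSturmianWord (p q : ℕ) (w : ZMod q → ℕ) : Prop :=
  (∀ i, w i = 0 ∨ w i = 1) ∧
  ((Finset.range q).filter (fun i : ℕ => w (i : ZMod q) = 1)).card = p ∧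
  IsSturmianBiSeq (fun i : ℤ => w (i : ZMod q))

/-!
The witness is the mechanical word `i ↦ ⌊p(i+1)/q⌋ - ⌊pi/q⌋`: its block sums telescope to
`⌊p(i+n)/q⌋ - ⌊pi/q⌋`, so `q` times any block sum of length `n` lies within `q - 1` of `pn`.

Conversely, for any balanced word with `p` ones per period, averaging a block sum over the `q`
starting positions gives the same estimate `|q S - pn| ≤ q - 1`. Hence the discrepancy
`h n = q · #(ones among the first n letters) - pn` varies by less than `q` and is `≡ -pn` modulo
`q`, which forces `h n = M - (M + pn) mod q` with `M = max h`. This says that the word is the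
mechanical word with intercept `M`, and since `p` is invertible modulo `q`, changing the intercept
is a cyclic shift.
-/

lemma card_filter_eq_one_eq_sum_s3 {ι : Type*} (s : Finset ι) (f : ι → ℕ)
    (hf : ∀ i ∈ s, f i = 0 ∨ f i = 1) : #{i ∈ s | f i = 1} = ∑ i ∈ s, f i := by
  rw [card_filter]
  refine sum_congr rfl fun i hi => ?_
  rcases hf i hi with h | h <;> simp [h]

lemma abs_sub_le_one_of_abs_mul_sub_le {q a b c : ℤ} (ha : |q * a - c| ≤ q - 1)
    (hb : |q * b - c| ≤ q - 1) : |a - b| ≤ 1 := by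
  have hq : 0 < q := by linarith [abs_nonneg (q * a - c)]
  have : q * |a - b| < q * 2 := by
    calc q * |a - b| = |(q * a - c) - (q * b - c)| := by
          rw [sub_sub_sub_cancel_right, ← mul_sub, abs_mul, abs_of_pos hq]
      _ ≤ |q * a - c| + |q * b - c| := abs_sub _ _
      _ < q * 2 := by linarith
  have := lt_of_mul_lt_mul_left this hq.le
  rw [abs_lt] at this
  rw [abs_le]
  omega

lemma abs_card_mul_sub_sum_le {ι : Type*} [DecidableEq ι] (s : Finset ι) (F : ι → ℤ) {a : ι}
    (ha : a ∈ s) (hF : ∀ b ∈ s, |F a - F b| ≤ 1) :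
    |#s * F a - ∑ b ∈ s, F b| ≤ #s - 1 := by
  calc |#s * F a - ∑ b ∈ s, F b| = |∑ b ∈ s.erase a, (F a - F b)| := by
        rw [sum_erase _ (sub_self _), sum_sub_distrib, sum_const, nsmul_eq_mul]
    _ ≤ ∑ b ∈ s.erase a, |F a - F b| := abs_sum_le_sum_abs _ _
    _ ≤ ∑ b ∈ s.erase a, 1 := sum_le_sum fun b hb => hF b (mem_of_mem_erase hb)
    _ = #s - 1 := by simp [card_erase_of_mem ha, Nat.cast_sub (card_pos.mpr ⟨a, ha⟩)]

lemma exists_eq_sub_emod_of_sub_lt {ι : Type*} [Nonempty ι] {q : ℤ} (h c : ι → ℤ)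
    (hosc : ∀ a b, h a - h b < q) (hdvd : ∀ i, q ∣ h i + c i) :
    ∃ M, ∀ i, h i = M - (M + c i) % q := by
  obtain ⟨i₀⟩ := ‹Nonempty ι›
  obtain ⟨M, ⟨j, rfl⟩, hM⟩ := Int.exists_greatest_of_bdd (P := fun z => ∃ i, h i = z)
    ⟨h i₀ + q, by rintro _ ⟨i, rfl⟩; linarith [hosc i i₀]⟩ ⟨h i₀, i₀, rfl⟩
  refine ⟨h j, fun i => ?_⟩
  have hmod : h j - h i ≡ h j + c i [ZMOD q] :=
    Int.modEq_iff_dvd.mpr (by simpa [add_comm] using hdvd i)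
  rw [← hmod.eq, Int.emod_eq_of_lt (by linarith [hM _ ⟨i, rfl⟩]) (hosc j i)]
  ring

def mechanical (p q : ℕ) (i : ℤ) : ℤ := p * (i + 1) / q - p * i / q

section Mechanical

variable {p q : ℕ}

lemma sum_range_mechanical (i : ℤ) (n : ℕ) :
    ∑ k ∈ range n, mechanical p q (i + k) = p * (i + n) / q - p * i / q := by
  have := sum_range_sub (fun k : ℕ => (p : ℤ) * (i + k) / q) n
  simpa [mechanical, add_assoc] using this

lemma mul_sum_range_mechanical (i : ℤ) (n : ℕ) :
    q * ∑ k ∈ range n, mechanical p q (i + k) = p * n + p * i % q - p * (i + n) % q := by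
  rw [sum_range_mechanical, Int.emod_def, Int.emod_def]
  ring

lemma abs_mul_sum_range_mechanical_sub_le (hq : 0 < q) (i : ℤ) (n : ℕ) :
    |q * ∑ k ∈ range n, mechanical p q (i + k) - p * n| ≤ q - 1 := by
  have hq' : (0 : ℤ) < q := by exact_mod_cast hq
  rw [mul_sum_range_mechanical, abs_le]
  have := Int.emod_nonneg (p * i) hq'.ne'
  have := Int.emod_nonneg (p * (i + n)) hq'.ne'
  have := Int.emod_lt_of_pos (p * i) hq'
  have := Int.emod_lt_of_pos (p * (i + n)) hq'
  constructor <;> linarith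

lemma abs_mul_mechanical_sub_le (hq : 0 < q) (i : ℤ) :
    |q * mechanical p q i - p| ≤ q - 1 := by
  simpa using abs_mul_sum_range_mechanical_sub_le (p := p) hq i 1

lemma mechanical_nonneg (hq : 0 < q) (i : ℤ) : 0 ≤ mechanical p q i := by
  have := (abs_le.mp (abs_mul_mechanical_sub_le (p := p) hq i)).1
  by_contra! h
  nlinarith

lemma mechanical_le_one (hpq : p < q) (i : ℤ) : mechanical p q i ≤ 1 := by
  have := (abs_le.mp (abs_mul_mechanical_sub_le (p := p) (q := q) (by omega) i)).2
  by_contra! h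
  have : (p : ℤ) < q := by exact_mod_cast hpq
  nlinarith

lemma mul_mechanical (i : ℤ) :
    q * mechanical p q i = p + p * i % q - p * (i + 1) % q := by
  simpa using mul_sum_range_mechanical (p := p) (q := q) i 1

lemma mechanical_periodic : Function.Periodic (mechanical p q) q := by
  intro i
  have hq : (q : ℤ) ∣ p * q := dvd_mul_left _ _
  simp only [mechanical, mul_add, add_right_comm _ ((p : ℤ) * q), Int.add_ediv_of_dvd_right hq]
  ring

def mechanicalWord (p q : ℕ) (x : ZMod q) : ℕ := (mechanical p q x.val).toNat

lemma mechanicalWord_intCast [NeZero q] (i : ℤ) :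
    (mechanicalWord p q i : ℤ) = mechanical p q i := by
  have hper : mechanical p q (i - i / q * q) = mechanical p q i := by
    simpa using (mechanical_periodic (p := p) (q := q)).sub_int_mul_eq (i / q)
  rw [mechanicalWord, ZMod.val_intCast, Int.emod_def, mul_comm, hper,
    Int.toNat_of_nonneg (mechanical_nonneg (NeZero.pos q) i)]

lemma isSturmianWord_mechanicalWord (hpq : p < q) :
    IsSturmianWord p q (mechanicalWord p q) := by
  have : NeZero q := ⟨by omega⟩
  have h01 (x : ZMod q) : mechanicalWord p q x = 0 ∨ mechanicalWord p q x = 1 := by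
    have := mechanical_nonneg (p := p) (NeZero.pos q) x.val
    have := mechanical_le_one hpq (x.val : ℤ)
    rw [mechanicalWord]
    omega
  have hsum (i : ℤ) (n : ℕ) : ∑ k ∈ range n, (mechanicalWord p q ((i + k : ℤ) : ZMod q) : ℤ) =
      ∑ k ∈ range n, mechanical p q (i + k) :=
    sum_congr rfl fun k _ => mechanicalWord_intCast _
  refine ⟨h01, ?_, fun i => h01 _, fun n i j => ?_⟩
  · rw [card_filter_eq_one_eq_sum_s3 _ _ fun i _ => h01 _]
    have hperiod := hsum 0 q
    rw [sum_range_mechanical] at hperiod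
    simp only [zero_add, Int.cast_natCast, mul_zero, Int.zero_ediv, sub_zero] at hperiod
    rw [Int.mul_ediv_cancel _ (by exact_mod_cast NeZero.ne q)] at hperiod
    exact_mod_cast hperiod
  · rw [hsum, hsum]
    exact abs_sub_le_one_of_abs_mul_sub_le (abs_mul_sum_range_mechanical_sub_le (NeZero.pos q) i n)
      (abs_mul_sum_range_mechanical_sub_le (NeZero.pos q) j n)

end Mechanical

def blockSum {q : ℕ} (w : ZMod q → ℕ) (n : ℕ) (x : ZMod q) : ℤ :=
  ∑ k ∈ range n, (w (x + k) : ℤ)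

section BlockSum

variable {q : ℕ} (w : ZMod q → ℕ)

lemma blockSum_add (m n : ℕ) (x : ZMod q) :
    blockSum w (m + n) x = blockSum w m x + blockSum w n (x + m) := by
  simp [blockSum, sum_range_add, add_assoc]

lemma blockSum_one (x : ZMod q) : blockSum w 1 x = w x := by
  simp [blockSum]

lemma sum_blockSum [NeZero q] (n : ℕ) : ∑ x, blockSum w n x = n * ∑ x, (w x : ℤ) := by
  simp only [blockSum]
  rw [sum_comm]
  have hshift (k : ℕ) : ∑ x, (w (x + k) : ℤ) = ∑ x, (w x : ℤ) :=
    Equiv.sum_comp (Equiv.addRight (k : ZMod q)) (fun x => (w x : ℤ))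
  simp [hshift]

end BlockSum

namespace IsSturmianWord

variable {p q : ℕ} [NeZero q] {w : ZMod q → ℕ}

lemma sum_eq (hw : IsSturmianWord p q w) : ∑ x, (w x : ℤ) = p := by
  have hcard := hw.2.1
  rw [card_filter_eq_one_eq_sum_s3 _ _ fun i _ => hw.1 _] at hcard
  have hrange : ∑ i ∈ range q, w i = ∑ x, w x := by
    refine sum_nbij (fun i : ℕ => (i : ZMod q)) (by simp) ?_ ?_ fun _ _ => rfl
    · intro a ha b hb hab
      simpa [ZMod.natCast_eq_natCast_iff', Nat.mod_eq_of_lt (mem_range.mp ha),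
        Nat.mod_eq_of_lt (mem_range.mp hb)] using hab
    · exact fun x _ => ⟨x.val, mem_range.mpr (ZMod.val_lt x), ZMod.natCast_zmod_val x⟩
  exact_mod_cast hrange ▸ hcard

lemma abs_blockSum_sub_le (hw : IsSturmianWord p q w) (n : ℕ) (x y : ZMod q) :
    |blockSum w n x - blockSum w n y| ≤ 1 := by
  simpa [blockSum] using hw.2.2.2 n x.val y.val

lemma abs_mul_blockSum_sub_le (hw : IsSturmianWord p q w) (n : ℕ) (x : ZMod q) :
    |q * blockSum w n x - p * n| ≤ q - 1 := by
  have := abs_card_mul_sub_sum_le univ (blockSum w n) (mem_univ x)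
    fun y _ => hw.abs_blockSum_sub_le n x y
  rwa [card_univ, ZMod.card, sum_blockSum, hw.sum_eq, mul_comm (n : ℤ)] at this

lemma exists_mul_eq (hw : IsSturmianWord p q w) :
    ∃ M : ℤ, ∀ n : ℕ, q * (w n : ℤ) = p + (M + p * n) % q - (M + p * n + p) % q := by
  set h : ℕ → ℤ := fun n => q * blockSum w n 0 - p * n with hh
  have hosc (a b : ℕ) : h a - h b < q := by
    rcases le_total b a with hba | hab
    · obtain ⟨m, rfl⟩ := Nat.exists_eq_add_of_le hba
      have := (abs_le.mp (hw.abs_mul_blockSum_sub_le m b)).2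
      simp only [hh, blockSum_add, zero_add]
      push_cast
      linarith
    · obtain ⟨m, rfl⟩ := Nat.exists_eq_add_of_le hab
      have := (abs_le.mp (hw.abs_mul_blockSum_sub_le m a)).1
      simp only [hh, blockSum_add, zero_add]
      push_cast
      linarith
  obtain ⟨M, hM⟩ := exists_eq_sub_emod_of_sub_lt h (fun n => p * n) hosc
    fun n => ⟨blockSum w n 0, by simp [hh]⟩
  refine ⟨M, fun n => ?_⟩
  have hstep : h (n + 1) - h n = q * w n - p := by
    simp only [hh, blockSum_add, blockSum_one, zero_add]
    push_cast
    ring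
  rw [hM, hM] at hstep
  push_cast at hstep
  rw [mul_add_one, ← add_assoc] at hstep
  linarith

theorem exists_eq_mechanicalWord_add (hcop : p.Coprime q) (hw : IsSturmianWord p q w) :
    ∃ t : ZMod q, ∀ x, w x = mechanicalWord p q (x + t) := by
  obtain ⟨M, hM⟩ := hw.exists_mul_eq
  obtain ⟨u, v, huv⟩ := Nat.isCoprime_iff_coprime.mpr hcop
  refine ⟨((u * M : ℤ) : ZMod q), fun x => ?_⟩
  -- `u` inverts `p` modulo `q`, so the intercept `M` is `p` times the shift `u * M`.
  have hcong : (p : ℤ) * (x.val + u * M) ≡ M + p * x.val [ZMOD q] :=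
    Int.modEq_iff_dvd.mpr ⟨v * M, by linear_combination -M * huv⟩
  have key : (q : ℤ) * w x = q * mechanical p q (x.val + u * M) := by
    have hx := hM x.val
    rw [ZMod.natCast_zmod_val] at hx
    rw [hx, mul_mechanical, mul_add_one, hcong.eq, (hcong.add_right p).eq]
  have := Int.eq_of_mul_eq_mul_left (by exact_mod_cast NeZero.ne q) key
  rw [← mechanicalWord_intCast] at this
  push_cast at this
  simpa using this

end IsSturmianWord

theorem sturmian_word_exists_unique_general (p q : ℕ) (hpq : p < q)
    (hcop : Nat.Coprime p q) :
    (∃ w : ZMod q → ℕ, IsSturmianWord p q w) ∧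
    (∀ w w' : ZMod q → ℕ, IsSturmianWord p q w → IsSturmianWord p q w' →
      ∃ t : ZMod q, ∀ i : ZMod q, w' i = w (i + t)) := by
  have : NeZero q := ⟨by omega⟩
  refine ⟨⟨mechanicalWord p q, isSturmianWord_mechanicalWord hpq⟩, fun w w' hw hw' => ?_⟩
  obtain ⟨t, ht⟩ := hw.exists_eq_mechanicalWord_add hcop
  obtain ⟨t', ht'⟩ := hw'.exists_eq_mechanicalWord_add hcop
  exact ⟨t' - t, fun i => by rw [ht', ht, add_assoc, sub_add_cancel]⟩

/-- For coprime `0 < p < q` there is a function `w : ℤ/qℤ → {0,1}` taking the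
value `1` at exactly `p` residues whose `q`-periodic bi-infinite extension is
Sturmian, and `w` is unique up to cyclic permutation (precomposition with a
translation of `ℤ/qℤ`).  This is the finite Sturmian word `W_{p/q}`. -/
theorem sturmian_word_exists_unique (p q : ℕ) (hp : 0 < p) (hpq : p < q)
    (hcop : Nat.Coprime p q) :
    (∃ w : ZMod q → ℕ, IsSturmianWord p q w) ∧
    (∀ w w' : ZMod q → ℕ, IsSturmianWord p q w → IsSturmianWord p q w' →
      ∃ t : ZMod q, ∀ i : ZMod q, w' i = w (i + t)) :=
  sturmian_word_exists_unique_general p q hpq hcop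
end

section
/- Let A = [[1,1],[0,1]] and B = [[1,0],[1,1]] in SL(2, ℤ). If M = M₁·M₂·⋯·M_n is a product with n ≥ 2, each M_i ∈ {A, B}, and at least one factor equal to A and at least one factor equal to B, then all four entries of M are positive integers and the trace of M is at least 3; in particular |tr M| > 2, so M represents a hyperbolic element of PSL(2, ℤ). -/
/-!
Entrywise, `A` and `B` are both `≥ 1` (the identity), and for matrices with nonnegative entries
multiplication is monotone; hence deleting factors from a product of such matrices can only
decrease every entry. A product containing both `A` and `B` contains `AB` or `BA` as a
subproduct, and `AB = [[2,1],[1,1]]`, `BA = [[1,1],[1,2]]` have positive entries and trace `3`.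
-/

open Matrix

/-- `A = [[1,1],[0,1]]`, representing `α : z ↦ z + 1`. -/
def matA : Matrix (Fin 2) (Fin 2) ℤ := !![1, 1; 0, 1]

/-- `B = [[1,0],[1,1]]`, representing `β : z ↦ z/(z + 1)`. -/
def matB : Matrix (Fin 2) (Fin 2) ℤ := !![1, 0; 1, 1]

theorem List.pair_sublist_or_of_mem {α : Type*} {a b : α} {l : List α} (ha : a ∈ l)
    (hb : b ∈ l) (hab : a ≠ b) : [a, b].Sublist l ∨ [b, a].Sublist l := by
  induction l with
  | nil => simp at ha
  | cons x l ih =>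
    rcases List.mem_cons.1 ha with rfl | ha' <;> rcases List.mem_cons.1 hb with rfl | hb'
    · exact absurd rfl hab
    · exact .inl ((List.singleton_sublist.2 hb').cons_cons _)
    · exact .inr ((List.singleton_sublist.2 ha').cons_cons _)
    · exact (ih ha' hb').imp (·.cons _) (·.cons _)

namespace Matrix

variable {l m n R : Type*} [Semiring R] [PartialOrder R] [IsOrderedRing R]

theorem trace_mono [Fintype n] {M N : Matrix n n R} (h : ∀ i j, M i j ≤ N i j) :
    M.trace ≤ N.trace :=
  Finset.sum_le_sum fun i _ => h i i

theorem mul_apply_mono [Fintype m] {M M' : Matrix l m R} {N N' : Matrix m n R}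
    (hM₀ : ∀ i j, 0 ≤ M i j) (hM : ∀ i j, M i j ≤ M' i j) (hN₀ : ∀ i j, 0 ≤ N i j)
    (hN : ∀ i j, N i j ≤ N' i j) (i : l) (k : n) :
    (M * N) i k ≤ (M' * N') i k :=
  Finset.sum_le_sum fun j _ =>
    mul_le_mul (hM i j) (hN j k) (hN₀ j k) ((hM₀ i j).trans (hM i j))

theorem one_apply_nonneg [DecidableEq n] (i j : n) : 0 ≤ (1 : Matrix n n R) i j := by
  rw [one_apply]
  split_ifs
  exacts [zero_le_one, le_rfl]

theorem apply_nonneg_of_one_apply_le [DecidableEq n] {M : Matrix n n R}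
    (hM : ∀ i j, (1 : Matrix n n R) i j ≤ M i j) (i j : n) : 0 ≤ M i j :=
  (one_apply_nonneg i j).trans (hM i j)

variable [Fintype n] [DecidableEq n]

theorem one_apply_le_list_prod {L : List (Matrix n n R)}
    (hL : ∀ M ∈ L, ∀ i j, (1 : Matrix n n R) i j ≤ M i j) (i j : n) :
    (1 : Matrix n n R) i j ≤ L.prod i j := by
  induction L generalizing i j with
  | nil => exact le_rfl
  | cons M L ih =>
    rw [List.prod_cons, ← mul_one (1 : Matrix n n R)]
    exact mul_apply_mono one_apply_nonneg (hL M List.mem_cons_self) one_apply_nonneg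
      (ih fun N hN => hL N (List.mem_cons_of_mem _ hN)) i j

theorem _root_.List.Sublist.prod_apply_le {L₁ L₂ : List (Matrix n n R)} (h : L₁.Sublist L₂)
    (hL₂ : ∀ M ∈ L₂, ∀ i j, (1 : Matrix n n R) i j ≤ M i j) (i j : n) :
    L₁.prod i j ≤ L₂.prod i j := by
  induction h generalizing i j with
  | slnil => exact le_rfl
  | @cons l₁ l₂ M h ih =>
    have hl₂ N (hN : N ∈ l₂) := hL₂ N (List.mem_cons_of_mem M hN)
    rw [List.prod_cons, ← one_mul l₁.prod]
    exact mul_apply_mono one_apply_nonneg (hL₂ M List.mem_cons_self)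
      (apply_nonneg_of_one_apply_le (one_apply_le_list_prod fun N hN => hl₂ N (h.subset hN)))
      (ih hl₂) i j
  | @cons_cons l₁ l₂ M h ih =>
    have hl₂ N (hN : N ∈ l₂) := hL₂ N (List.mem_cons_of_mem M hN)
    rw [List.prod_cons, List.prod_cons]
    exact mul_apply_mono (apply_nonneg_of_one_apply_le (hL₂ M List.mem_cons_self))
      (fun _ _ => le_rfl)
      (apply_nonneg_of_one_apply_le (one_apply_le_list_prod fun N hN => hl₂ N (h.subset hN)))
      (ih hl₂) i j

end Matrix

theorem one_apply_le_matA (i j : Fin 2) : (1 : Matrix (Fin 2) (Fin 2) ℤ) i j ≤ matA i j := by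
  fin_cases i <;> fin_cases j <;> decide

theorem one_apply_le_matB (i j : Fin 2) : (1 : Matrix (Fin 2) (Fin 2) ℤ) i j ≤ matB i j := by
  fin_cases i <;> fin_cases j <;> decide

theorem matA_mul_matB : matA * matB = !![2, 1; 1, 1] := by
  simp [matA, matB]

theorem matB_mul_matA : matB * matA = !![1, 1; 1, 2] := by
  simp [matA, matB]

theorem exists_sublist_prod_pos_and_three_le_trace {L : List (Matrix (Fin 2) (Fin 2) ℤ)}
    (hA : matA ∈ L) (hB : matB ∈ L) :
    ∃ S : List (Matrix (Fin 2) (Fin 2) ℤ),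
      S.Sublist L ∧ (∀ i j, 0 < S.prod i j) ∧ 3 ≤ S.prod.trace := by
  rcases List.pair_sublist_or_of_mem hA hB (by decide) with h | h
  · refine ⟨_, h, fun i j => ?_, ?_⟩ <;> simp only [List.prod_pair, matA_mul_matB]
    · fin_cases i <;> fin_cases j <;> decide
    · decide
  · refine ⟨_, h, fun i j => ?_, ?_⟩ <;> simp only [List.prod_pair, matB_mul_matA]
    · fin_cases i <;> fin_cases j <;> decide
    · decide

theorem sturmian_product_hyperbolic_general (L : List (Matrix (Fin 2) (Fin 2) ℤ))
    (hmem : ∀ M ∈ L, M = matA ∨ M = matB)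
    (hA : matA ∈ L) (hB : matB ∈ L) :
    (∀ i j : Fin 2, 0 < L.prod i j) ∧ 3 ≤ Matrix.trace L.prod ∧
      2 < |Matrix.trace L.prod| := by
  have hL : ∀ M ∈ L, ∀ i j, (1 : Matrix (Fin 2) (Fin 2) ℤ) i j ≤ M i j := fun M hM => by
    rcases hmem M hM with rfl | rfl
    exacts [one_apply_le_matA, one_apply_le_matB]
  obtain ⟨S, hSL, hS_pos, hS_trace⟩ := exists_sublist_prod_pos_and_three_le_trace hA hB
  have hle := hSL.prod_apply_le hL
  have htrace : 3 ≤ L.prod.trace := hS_trace.trans (trace_mono hle)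
  exact ⟨fun i j => (hS_pos i j).trans_le (hle i j), htrace, lt_abs.2 (.inl (by omega))⟩

/-- If `M` is a product of `n ≥ 2` factors, each equal to `A` or `B`, with at least
one factor `A` and at least one factor `B`, then all four entries of `M` are
positive and `tr M ≥ 3`; in particular `|tr M| > 2`, so `M` represents a
hyperbolic element of `PSL(2,ℤ)`. -/
theorem sturmian_product_hyperbolic (L : List (Matrix (Fin 2) (Fin 2) ℤ))
    (hlen : 2 ≤ L.length) (hmem : ∀ M ∈ L, M = matA ∨ M = matB)
    (hA : matA ∈ L) (hB : matB ∈ L) :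
    (∀ i j : Fin 2, 0 < L.prod i j) ∧ 3 ≤ Matrix.trace L.prod ∧
      2 < |Matrix.trace L.prod| :=
  sturmian_product_hyperbolic_general L hmem hA hB
end

section
/- Let p > q ≥ 1 be integers and c ∈ ℂ. Then the filled Julia set K_c of the correspondence f_c(z) = z^{p/q} + c is a nonempty compact subset of ℂ. -/
/-- A forward orbit of the correspondence `f_c(z) = z^{p/q} + c`, i.e. a sequence
with `(z_{n+1} − c)^q = z_n^p` for all `n`. -/
def IsFwdOrbit (p q : ℕ) (c : ℂ) (z : ℕ → ℂ) : Prop :=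
  ∀ n : ℕ, (z (n + 1) - c) ^ q = (z n) ^ p

/-- The filled Julia set of the correspondence `f_c(z) = z^{p/q} + c`: the set of
points admitting at least one bounded forward orbit. -/
def filledJulia (p q : ℕ) (c : ℂ) : Set ℂ :=
  {z | ∃ s : ℕ → ℂ, s 0 = z ∧ IsFwdOrbit p q c s ∧ Bornology.IsBounded (Set.range s)}

open Metric Polynomial

/-- Escape estimate: a bounded orbit must start within radius `3^q + ‖c‖ + 1`. -/
lemma orbit_start_bound (p q : ℕ) (hq : 1 ≤ q) (hpq : q < p) (c : ℂ) (s : ℕ → ℂ)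
    (hs : IsFwdOrbit p q c s) (hb : Bornology.IsBounded (Set.range s)) :
    ‖s 0‖ ≤ 3 ^ q + ‖c‖ + 1 := by
  set R : ℝ := 3 ^ q + ‖c‖ + 1 with hRdef
  have h3q : (1:ℝ) ≤ 3 ^ q := one_le_pow₀ (by norm_num)
  have hR1 : (1:ℝ) ≤ R := by have := norm_nonneg c; simp only [hRdef]; linarith
  by_contra h
  push_neg at h
  have step : ∀ n, R ≤ ‖s n‖ → 2 * ‖s n‖ ≤ ‖s (n + 1)‖ := by
    intro n hn
    by_contra hlt
    push_neg at hlt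
    have hc : ‖c‖ ≤ ‖s n‖ := by
      have : ‖c‖ ≤ R := by simp only [hRdef]; linarith
      linarith
    have h1 : ‖s n‖ ^ p = ‖s (n + 1) - c‖ ^ q := by
      rw [← norm_pow, ← norm_pow, hs n]
    have h2 : ‖s (n + 1) - c‖ ≤ 3 * ‖s n‖ := by
      calc ‖s (n + 1) - c‖ ≤ ‖s (n + 1)‖ + ‖c‖ := norm_sub_le _ _
        _ ≤ 3 * ‖s n‖ := by linarith
    have hsn1 : (1:ℝ) ≤ ‖s n‖ := le_trans hR1 hn
    have h4 : ‖s n‖ ^ p ≤ 3 ^ q * ‖s n‖ ^ q := by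
      calc ‖s n‖ ^ p = ‖s (n + 1) - c‖ ^ q := h1
        _ ≤ (3 * ‖s n‖) ^ q := by
            apply pow_le_pow_left₀ (norm_nonneg _) h2 q
        _ = 3 ^ q * ‖s n‖ ^ q := mul_pow _ _ _
    have h5 : ‖s n‖ ^ (q + 1) ≤ ‖s n‖ ^ p := pow_le_pow_right₀ hsn1 hpq
    have h6 : ‖s n‖ ^ q * ‖s n‖ ≤ 3 ^ q * ‖s n‖ ^ q := by
      calc ‖s n‖ ^ q * ‖s n‖ = ‖s n‖ ^ (q + 1) := (pow_succ _ _).symm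
        _ ≤ 3 ^ q * ‖s n‖ ^ q := le_trans h5 h4
    have hq0 : (0:ℝ) < ‖s n‖ ^ q := pow_pos (by linarith) q
    have : ‖s n‖ ≤ 3 ^ q := by nlinarith
    have : R ≤ 3 ^ q := le_trans hn this
    simp only [hRdef] at this
    have := norm_nonneg c
    linarith
  have growth : ∀ n, 2 ^ n * R ≤ ‖s n‖ := by
    intro n
    induction n with
    | zero => simpa using h.le
    | succ n ih =>
      have hRn : R ≤ ‖s n‖ := by
        have h2n : (1:ℝ) ≤ 2 ^ n := one_le_pow₀ (by norm_num)
        nlinarith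
      have := step n hRn
      calc 2 ^ (n + 1) * R = 2 * (2 ^ n * R) := by ring
        _ ≤ 2 * ‖s n‖ := by linarith
        _ ≤ ‖s (n + 1)‖ := this
  obtain ⟨C, hC⟩ := hb.exists_norm_le
  obtain ⟨n, hn⟩ := pow_unbounded_of_one_lt C (by norm_num : (1:ℝ) < 2)
  have h1 := growth n
  have h2 := hC (s n) (Set.mem_range_self n)
  have h3 : (2:ℝ) ^ n ≤ 2 ^ n * R := le_mul_of_one_le_right (by positivity) hR1
  linarith

/-- For `p > q ≥ 1`, the filled Julia set `K_c` of `f_c(z) = z^{p/q} + c` is a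
nonempty compact subset of `ℂ`. -/
theorem filledJulia_nonempty_compact (p q : ℕ) (hq : 1 ≤ q) (hpq : q < p) (c : ℂ) :
    (filledJulia p q c).Nonempty ∧ IsCompact (filledJulia p q c) := by
  constructor
  · -- find a fixed point: a root of (X - c)^q - X^p
    have hdeg1 : (((X : ℂ[X]) - C c) ^ q).degree = (q : WithBot ℕ) := by
      rw [degree_pow, degree_X_sub_C]; simp
    have hdeg2 : ((X : ℂ[X]) ^ p).degree = (p : WithBot ℕ) := degree_X_pow p
    have hlt : (((X : ℂ[X]) - C c) ^ q).degree < ((X : ℂ[X]) ^ p).degree := by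
      rw [hdeg1, hdeg2]; exact_mod_cast hpq
    have hdeg : (((X : ℂ[X]) - C c) ^ q - (X : ℂ[X]) ^ p).degree = (p : WithBot ℕ) := by
      rw [degree_sub_eq_right_of_degree_lt hlt, hdeg2]
    have hpos : 0 < (((X : ℂ[X]) - C c) ^ q - (X : ℂ[X]) ^ p).degree := by
      rw [hdeg]; exact_mod_cast (by omega : 0 < p)
    obtain ⟨z, hz⟩ := Complex.exists_root hpos
    have hz' : (z - c) ^ q = z ^ p := by
      have := hz
      simp only [IsRoot, eval_sub, eval_pow, eval_X, eval_C, sub_eq_zero] at this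
      exact this
    refine ⟨z, fun _ => z, rfl, fun n => hz', ?_⟩
    have : Set.range (fun _ : ℕ => z) = {z} := Set.range_const
    rw [this]
    exact Bornology.isBounded_singleton
  · -- compactness
    set R : ℝ := 3 ^ q + ‖c‖ + 1 with hRdef
    set T : Set (ℕ → ℂ) :=
      {s | IsFwdOrbit p q c s ∧ ∀ n, s n ∈ closedBall (0:ℂ) R} with hTdef
    have hTclosed : IsClosed T := by
      have : T = (⋂ n, {s : ℕ → ℂ | (s (n + 1) - c) ^ q = (s n) ^ p}) ∩
          (⋂ n, {s : ℕ → ℂ | s n ∈ closedBall (0:ℂ) R}) := by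
        ext s
        constructor
        · rintro ⟨h1, h2⟩
          exact ⟨Set.mem_iInter.2 h1, Set.mem_iInter.2 h2⟩
        · rintro ⟨h1, h2⟩
          exact ⟨fun n => Set.mem_iInter.1 h1 n, fun n => Set.mem_iInter.1 h2 n⟩
      rw [this]
      apply IsClosed.inter
      · exact isClosed_iInter fun n => isClosed_eq
          (((continuous_apply (n + 1)).sub continuous_const).pow q)
          ((continuous_apply n).pow p)
      · exact isClosed_iInter fun n =>
          IsClosed.preimage (continuous_apply n) Metric.isClosed_closedBall
    have hTsub : T ⊆ Set.univ.pi (fun _ : ℕ => closedBall (0:ℂ) R) := by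
      intro s hs n _; exact hs.2 n
    have hTcompact : IsCompact T :=
      (isCompact_univ_pi fun _ => isCompact_closedBall _ _).of_isClosed_subset hTclosed hTsub
    have hEq : filledJulia p q c = (fun s : ℕ → ℂ => s 0) '' T := by
      ext z
      constructor
      · rintro ⟨s, hs0, hso, hsb⟩
        refine ⟨s, ⟨hso, fun n => ?_⟩, hs0⟩
        have horb : IsFwdOrbit p q c (fun k => s (n + k)) := fun k => hso (n + k)
        have hbd : Bornology.IsBounded (Set.range (fun k => s (n + k))) :=
          hsb.subset (by rintro x ⟨k, rfl⟩; exact ⟨n + k, rfl⟩)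
        have := orbit_start_bound p q hq hpq c _ horb hbd
        simp only [mem_closedBall, dist_zero_right]
        simpa using this
      · rintro ⟨s, ⟨hso, hsball⟩, hs0⟩
        refine ⟨s, hs0, hso, ?_⟩
        apply (isBounded_closedBall (x := (0:ℂ)) (r := R)).subset
        rintro x ⟨n, rfl⟩
        exact hsball n
    rw [hEq]
    exact hTcompact.image (continuous_apply 0)
end

section
/- Let p > q ≥ 1 be integers with p prime, and let c ∈ ℂ. If 0 ∈ K_c, then the filled Julia set K_c of the correspondence f_c(z) = z^{p/q} + c is connected. -/
open Set

lemma aux_same_pow {n : ℕ} (hn : n ≠ 0) {z z' : ℂ} (h : z' ^ n = z ^ n) :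
    ∃ u : ℂ, u ^ n = 1 ∧ z' = u * z := by
  rcases eq_or_ne z 0 with rfl | hz
  · refine ⟨1, one_pow n, ?_⟩
    have h2 : z' ^ n = 0 := by rw [h, zero_pow hn]
    have := (pow_eq_zero_iff hn).mp h2
    simp [this]
  · refine ⟨z' / z, ?_, by field_simp⟩
    rw [div_pow, h, div_self (pow_ne_zero n hz)]

lemma aux_pow_preimage_isCompact (p : ℕ) (hp : p ≠ 0) (S : Set ℂ) (hSc : IsCompact S) :
    IsCompact {z : ℂ | z ^ p ∈ S} := by
  rw [Metric.isCompact_iff_isClosed_bounded]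
  constructor
  · exact hSc.isClosed.preimage (continuous_pow p)
  · obtain ⟨M, hM⟩ := (Metric.isBounded_iff_subset_closedBall 0).mp hSc.isBounded
    rw [Metric.isBounded_iff_subset_closedBall 0]
    refine ⟨max 1 M, fun z hz => ?_⟩
    simp only [Metric.mem_closedBall, dist_zero_right] at *
    rcases le_or_gt ‖z‖ 1 with h1 | h1
    · exact h1.trans (le_max_left _ _)
    · have h2 : ‖z‖ ≤ ‖z‖ ^ p := le_self_pow₀ h1.le hp
      have h3 : ‖z ^ p‖ ≤ M := by simpa using hM hz
      rw [norm_pow] at h3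
      exact le_trans (h2.trans h3) (le_max_right _ _)

lemma aux_pow_preimage_isConnected (p : ℕ) (hp : p ≠ 0) (S : Set ℂ) (hSc : IsCompact S)
    (hS : IsPreconnected S) (h0S : (0 : ℂ) ∈ S) :
    IsConnected {z : ℂ | z ^ p ∈ S} := by
  haveI : NeZero p := ⟨hp⟩
  set P := {z : ℂ | z ^ p ∈ S} with hPdef
  have h0P : (0 : ℂ) ∈ P := by simp [P, zero_pow hp, h0S]
  have hPc : IsCompact P := aux_pow_preimage_isCompact p hp S hSc
  rw [isConnected_iff_connectedSpace]
  haveI : CompactSpace ↥P := isCompact_iff_compactSpace.mp hPc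
  have memP : ∀ (v z : ℂ), v ^ p = 1 → z ∈ P → v * z ∈ P := by
    intro v z hv hz
    show (v * z) ^ p ∈ S
    rw [mul_pow, hv, one_mul]; exact hz
  obtain ⟨ζ, hζ⟩ : ∃ ζ : ℂ, IsPrimitiveRoot ζ p := ⟨_, Complex.isPrimitiveRoot_exp p hp⟩
  have hζ1 : ζ ^ p = 1 := hζ.pow_eq_one
  have hpow1 : ∀ k : ℕ, (ζ ^ k) ^ p = 1 := fun k => by
    rw [← pow_mul, mul_comm, pow_mul, hζ1, one_pow]
  let m : ℕ → ↥P → ↥P := fun k x => ⟨ζ ^ k * x.1, memP _ _ (hpow1 k) x.2⟩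
  have hmcont : ∀ k, Continuous (m k) := fun k =>
    Continuous.subtype_mk (continuous_const.mul continuous_subtype_val) _
  have hζmod : ∀ k : ℕ, ζ ^ k = ζ ^ (k % p) := by
    intro k
    conv_lhs => rw [← Nat.mod_add_div k p, pow_add, pow_mul, hζ1, one_pow, mul_one]
  have hmadd : ∀ j k x, m j (m k x) = m (j + k) x := by
    intro j k x; apply Subtype.ext
    show ζ ^ j * (ζ ^ k * x.1) = ζ ^ (j + k) * x.1
    rw [pow_add]; ring
  have hmmod : ∀ k x, m k x = m (k % p) x := by
    intro k x; apply Subtype.ext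
    show ζ ^ k * x.1 = ζ ^ (k % p) * x.1
    rw [← hζmod]
  let x0 : ↥P := ⟨0, h0P⟩
  have hm0 : ∀ k, m k x0 = x0 := fun k => Subtype.ext (by show ζ ^ k * 0 = 0; ring)
  have hppos : 0 < p := Nat.pos_of_ne_zero hp
  have hmain : ∀ y : ↥P, y ∈ connectedComponent x0 := by
    intro y
    by_contra hy
    have hrot : ∀ k : ℕ, m k y ∉ connectedComponent x0 := by
      intro k hk
      apply hy
      have hinv : m (p - k % p) (m k y) = y := by
        rw [hmadd]
        have h1 : ζ ^ (p - k % p + k) = 1 := by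
          rw [pow_add, hζmod k, ← pow_add, Nat.sub_add_cancel (Nat.mod_lt k hppos).le, hζ1]
        apply Subtype.ext
        show ζ ^ (p - k % p + k) * y.1 = y.1
        rw [h1, one_mul]
      have himg := (hmcont (p - k % p)).image_connectedComponent_subset x0
      rw [hm0] at himg
      have : m (p - k % p) (m k y) ∈ connectedComponent x0 :=
        himg ⟨m k y, hk, rfl⟩
      rwa [hinv] at this
    have hZ : ∀ k : Fin p, ∃ Z : Set ↥P, IsClopen Z ∧ x0 ∈ Z ∧ m k.1 y ∉ Z := by
      intro k
      have h1 := hrot k.1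
      rw [connectedComponent_eq_iInter_isClopen] at h1
      simp only [mem_iInter, not_forall] at h1
      obtain ⟨⟨Z, hZc, hZ0⟩, hZy⟩ := h1
      exact ⟨Z, hZc, hZ0, hZy⟩
    choose Z hZclopen hZ0 hZy using hZ
    set B : Set ↥P := ⋂ (j : Fin p) (k : Fin p), m j.1 ⁻¹' Z k with hBdef
    have hBclopen : IsClopen B := by
      constructor
      · exact isClosed_iInter fun j => isClosed_iInter fun k =>
          (hZclopen k).1.preimage (hmcont j.1)
      · exact isOpen_iInter_of_finite fun j => isOpen_iInter_of_finite fun k =>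
          (hZclopen k).2.preimage (hmcont j.1)
    have hB0 : x0 ∈ B := mem_iInter.mpr fun j => mem_iInter.mpr fun k => by
      show m j.1 x0 ∈ Z k
      rw [hm0]; exact hZ0 k
    have hByn : y ∉ B := by
      intro hyB
      have := mem_iInter.mp (mem_iInter.mp hyB ⟨0, hppos⟩) ⟨0, hppos⟩
      exact hZy ⟨0, hppos⟩ this
    have hBsat : ∀ (x : ↥P) (k : ℕ), x ∈ B → m k x ∈ B := by
      intro x k hx
      refine mem_iInter.mpr fun j => mem_iInter.mpr fun i => ?_
      show m j.1 (m k x) ∈ Z i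
      rw [hmadd, hmmod]
      have hlt : (j.1 + k) % p < p := Nat.mod_lt _ hppos
      exact mem_iInter.mp (mem_iInter.mp hx ⟨(j.1 + k) % p, hlt⟩) i
    set A1 : Set ℂ := (fun z : ℂ => z ^ p) '' (Subtype.val '' B) with hA1def
    set A2 : Set ℂ := (fun z : ℂ => z ^ p) '' (Subtype.val '' Bᶜ) with hA2def
    have hA1c : IsCompact A1 :=
      ((hBclopen.1.isCompact).image continuous_subtype_val).image (continuous_pow p)
    have hA2c : IsCompact A2 :=
      ((hBclopen.compl.1.isCompact).image continuous_subtype_val).image (continuous_pow p)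
    have hcover : S ⊆ A1 ∪ A2 := by
      intro w hw
      obtain ⟨z, hz⟩ := IsAlgClosed.exists_pow_nat_eq w hppos
      have hzP : z ∈ P := by show z ^ p ∈ S; rw [hz]; exact hw
      by_cases hzB : (⟨z, hzP⟩ : ↥P) ∈ B
      · exact Or.inl ⟨z, ⟨⟨z, hzP⟩, hzB, rfl⟩, hz⟩
      · exact Or.inr ⟨z, ⟨⟨z, hzP⟩, hzB, rfl⟩, hz⟩
    have hdisj : Disjoint A1 A2 := by
      rw [Set.disjoint_left]
      rintro w ⟨z1, ⟨x1, hx1B, rfl⟩, rfl⟩ ⟨z2, ⟨x2, hx2B, rfl⟩, hz2⟩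
      obtain ⟨u, hu, hz2u⟩ := aux_same_pow hp hz2
      obtain ⟨k, hk, rfl⟩ := hζ.eq_pow_of_pow_eq_one hu
      apply hx2B
      have : x2 = m k x1 := Subtype.ext hz2u
      rw [this]
      exact hBsat x1 k hx1B
    have hS' := (isPreconnected_iff_subset_of_fully_disjoint_closed hSc.isClosed).mp hS
      A1 A2 hA1c.isClosed hA2c.isClosed hcover hdisj
    rcases hS' with h | h
    · have hy2 : (y.1) ^ p ∈ A2 := ⟨y.1, ⟨y, hByn, rfl⟩, rfl⟩
      have hy1 : (y.1) ^ p ∈ A1 := h y.2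
      exact Set.disjoint_left.mp hdisj hy1 hy2
    · have h01 : (0 : ℂ) ∈ A1 := ⟨0, ⟨x0, hB0, rfl⟩, by simp [zero_pow hp]⟩
      have h02 : (0 : ℂ) ∈ A2 := h h0S
      exact Set.disjoint_left.mp hdisj h01 h02
  rw [connectedSpace_iff_connectedComponent]
  exact ⟨x0, eq_univ_of_forall hmain⟩

lemma aux_iInter_preconnected (T : ℕ → Set ℂ) (hc : ∀ n, IsCompact (T n))
    (hcon : ∀ n, IsPreconnected (T n)) (hanti : Antitone T) :
    IsPreconnected (⋂ n, T n) := by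
  set K := ⋂ n, T n with hKdef
  intro U V hU hV hKUV ⟨a, haK, haU⟩ ⟨b, hbK, hbV⟩
  by_contra hcontra
  rw [Set.not_nonempty_iff_eq_empty] at hcontra
  have hKE : ∀ x, x ∈ K → x ∈ U → x ∈ V → False := fun x h1 h2 h3 => by
    have hmem : x ∈ K ∩ (U ∩ V) := ⟨h1, h2, h3⟩
    rw [hcontra] at hmem
    exact hmem
  -- K splits into two disjoint compacts
  have hKcl : IsClosed K := isClosed_iInter fun n => (hc n).isClosed
  have hKc : IsCompact K := (hc 0).of_isClosed_subset hKcl (iInter_subset _ 0)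
  set K1 := K \ V with hK1
  set K2 := K \ U with hK2
  have hK1c : IsCompact K1 := hKc.diff hV
  have hK2c : IsCompact K2 := hKc.diff hU
  have hdisj : Disjoint K1 K2 := by
    rw [Set.disjoint_left]
    rintro x ⟨hxK, hxV⟩ ⟨_, hxU⟩
    rcases hKUV hxK with h | h
    exacts [hxU h, hxV h]
  obtain ⟨U', V', hU', hV', hK1U', hK2V', hU'V'⟩ :=
    SeparatedNhds.of_isCompact_isCompact hK1c hK2c hdisj
  -- some T N is inside U' ∪ V'
  have hTN : ∃ N, T N ⊆ U' ∪ V' := by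
    by_contra hno
    push_neg at hno
    have hne : ∀ n, (T n \ (U' ∪ V')).Nonempty := by
      intro n
      obtain ⟨x, hx, hx'⟩ := Set.not_subset.mp (hno n)
      exact ⟨x, hx, hx'⟩
    have hdir : Directed (· ⊇ ·) (fun n => T n \ (U' ∪ V')) := by
      intro i j
      exact ⟨max i j, Set.diff_subset_diff_left (hanti (le_max_left i j)),
        Set.diff_subset_diff_left (hanti (le_max_right i j))⟩
    have hcompact : ∀ n, IsCompact (T n \ (U' ∪ V')) := fun n => (hc n).diff (hU'.union hV')
    have hclosed : ∀ n, IsClosed (T n \ (U' ∪ V')) := fun n =>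
      (hc n).isClosed.sdiff (hU'.union hV')
    obtain ⟨x, hx⟩ := IsCompact.nonempty_iInter_of_directed_nonempty_isCompact_isClosed
      _ hdir hne hcompact hclosed
    simp only [mem_iInter, Set.mem_diff] at hx
    have hxK : x ∈ K := mem_iInter.mpr fun n => (hx n).1
    rcases hKUV hxK with h | h
    · by_cases hxV : x ∈ V
      · exact hKE x hxK h hxV
      · exact (hx 0).2 (Or.inl (hK1U' ⟨hxK, hxV⟩))
    · by_cases hxU : x ∈ U
      · exact hKE x hxK hxU h
      · exact (hx 0).2 (Or.inr (hK2V' ⟨hxK, hxU⟩))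
  obtain ⟨N, hN⟩ := hTN
  have h1 : (T N ∩ U').Nonempty := by
    refine ⟨a, mem_iInter.mp haK N, hK1U' ⟨haK, ?_⟩⟩
    intro haV
    exact hKE a haK haU haV
  have h2 : (T N ∩ V').Nonempty := by
    refine ⟨b, mem_iInter.mp hbK N, hK2V' ⟨hbK, ?_⟩⟩
    intro hbU
    exact hKE b hbK hbU hbV
  obtain ⟨x, hxT, hxU', hxV'⟩ := hcon N U' V' hU' hV' hN h1 h2
  exact Set.disjoint_left.mp hU'V' hxU' hxV'

/-- The `n`-th approximation to the filled Julia set: points whose orbits can stay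
`n` steps before landing in the closed ball of radius `R`. -/
def juliaApprox (p q : ℕ) (c : ℂ) (R : ℝ) : ℕ → Set ℂ
  | 0 => Metric.closedBall 0 R
  | n + 1 => {z : ℂ | z ^ p ∈ (fun w => (w - c) ^ q) '' juliaApprox p q c R n}


/-- For `p > q ≥ 1` with `p` prime: if `0 ∈ K_c` then the filled Julia set `K_c`
of `f_c(z) = z^{p/q} + c` is connected (`M_{β,0} ⊆ M_β`). -/
theorem filledJulia_connected_of_zero_mem (p q : ℕ) (hq : 1 ≤ q) (hpq : q < p)
    (hp : Nat.Prime p) (c : ℂ) (h0 : (0 : ℂ) ∈ filledJulia p q c) :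
    IsConnected (filledJulia p q c) := by
  have hpne : p ≠ 0 := hp.ne_zero
  have hqne : q ≠ 0 := by omega
  set R : ℝ := (‖c‖ + 2) ^ q + 1 with hRdef
  have hc2 : (0:ℝ) ≤ ‖c‖ + 2 := by positivity
  have hR1 : 1 ≤ R := by nlinarith [pow_nonneg hc2 q]
  have hRbig : (‖c‖ + 2) ^ q < R := by simp [hRdef]
  set T := juliaApprox p q c R with hTdef
  have hT0 : T 0 = Metric.closedBall 0 R := rfl
  have hTsucc : ∀ n, T (n + 1) = {z : ℂ | z ^ p ∈ (fun w => (w - c) ^ q) '' T n} :=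
    fun n => rfl
  -- escape estimate
  have hkey : ∀ w w' : ℂ, R < ‖w‖ → (w' - c) ^ q = w ^ p → 2 * ‖w‖ ≤ ‖w'‖ := by
    intro w w' hw hrel
    by_contra hlt
    push_neg at hlt
    have hw1 : 1 ≤ ‖w‖ := le_trans hR1 hw.le
    have h1 : ‖w‖ ^ p = ‖w' - c‖ ^ q := by rw [← norm_pow, ← norm_pow, hrel]
    have h2 : ‖w' - c‖ < 2 * ‖w‖ + ‖c‖ := lt_of_le_of_lt (norm_sub_le w' c) (by linarith)
    have h3 : ‖w' - c‖ ^ q < (2 * ‖w‖ + ‖c‖) ^ q :=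
      pow_lt_pow_left₀ h2 (norm_nonneg _) hqne
    have h4 : (2 * ‖w‖ + ‖c‖) ≤ (‖c‖ + 2) * ‖w‖ := by nlinarith [norm_nonneg c]
    have h6 : (‖c‖ + 2) ^ q ≤ ‖w‖ := le_trans hRbig.le hw.le
    have hfinal : ‖w‖ ^ p < ‖w‖ ^ p := by
      calc ‖w‖ ^ p = ‖w' - c‖ ^ q := h1
        _ < (2 * ‖w‖ + ‖c‖) ^ q := h3
        _ ≤ ((‖c‖ + 2) * ‖w‖) ^ q := pow_le_pow_left₀ (by positivity) h4 q
        _ = (‖c‖ + 2) ^ q * ‖w‖ ^ q := mul_pow _ _ _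
        _ ≤ ‖w‖ * ‖w‖ ^ q := mul_le_mul_of_nonneg_right h6 (pow_nonneg (norm_nonneg w) q)
        _ = ‖w‖ ^ (q + 1) := by rw [pow_succ]; ring
        _ ≤ ‖w‖ ^ p := pow_le_pow_right₀ hw1 (by omega)
    exact lt_irrefl _ hfinal
  -- bounded orbits stay in the ball of radius R
  have hstay : ∀ s : ℕ → ℂ, IsFwdOrbit p q c s → Bornology.IsBounded (Set.range s) →
      ∀ n, ‖s n‖ ≤ R := by
    intro s horb hbd n
    by_contra hgt
    push_neg at hgt
    obtain ⟨M, hM⟩ := isBounded_iff_forall_norm_le.mp hbd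
    have hMn : ∀ k, ‖s k‖ ≤ M := fun k => hM _ (Set.mem_range_self k)
    have hgrow : ∀ k, 2 ^ k * ‖s n‖ ≤ ‖s (n + k)‖ ∧ R < ‖s (n + k)‖ := by
      intro k
      induction k with
      | zero => exact ⟨by simp, hgt⟩
      | succ k ih =>
        have hk := hkey (s (n + k)) (s (n + k + 1)) ih.2 (horb (n + k))
        have hnn : (0:ℝ) ≤ ‖s (n + k)‖ := norm_nonneg _
        constructor
        · calc 2 ^ (k + 1) * ‖s n‖ = 2 * (2 ^ k * ‖s n‖) := by ring
            _ ≤ 2 * ‖s (n + k)‖ := by linarith [ih.1]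
            _ ≤ ‖s (n + k + 1)‖ := hk
        · show R < ‖s (n + k + 1)‖
          linarith [ih.2]
    obtain ⟨k, hk⟩ := pow_unbounded_of_one_lt (M : ℝ) (one_lt_two)
    have h1 := (hgrow k).1
    have h2 : (2:ℝ) ^ k ≤ 2 ^ k * ‖s n‖ := by
      nlinarith [pow_pos (zero_lt_two (α := ℝ)) k, hgt, hR1]
    linarith [hMn (n + k)]
  -- T 1 ⊆ T 0
  have hT10 : T 1 ⊆ T 0 := by
    intro z hz
    rw [hTsucc 0] at hz
    obtain ⟨w, hwball, hwq0⟩ := hz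
    have hwq : (w - c) ^ q = z ^ p := hwq0
    rw [hT0, mem_closedBall_zero_iff] at hwball
    rw [hT0, mem_closedBall_zero_iff]
    have h1 : ‖z‖ ^ p = ‖w - c‖ ^ q := by rw [← norm_pow, ← norm_pow, hwq]
    have h2 : ‖w - c‖ ≤ R + ‖c‖ := le_trans (norm_sub_le _ _) (by linarith)
    have h4 : R + ‖c‖ ≤ (‖c‖ + 1) * R := by nlinarith [norm_nonneg c]
    have h6 : (‖c‖ + 1) ^ q ≤ R :=
      le_trans (pow_le_pow_left₀ (by positivity) (by linarith) q) hRbig.le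
    have h8 : ‖z‖ ^ p ≤ R ^ p := by
      calc ‖z‖ ^ p = ‖w - c‖ ^ q := h1
        _ ≤ (R + ‖c‖) ^ q := pow_le_pow_left₀ (norm_nonneg _) h2 q
        _ ≤ ((‖c‖ + 1) * R) ^ q := pow_le_pow_left₀ (by positivity) h4 q
        _ = (‖c‖ + 1) ^ q * R ^ q := mul_pow _ _ _
        _ ≤ R * R ^ q := mul_le_mul_of_nonneg_right h6 (pow_nonneg (by linarith) q)
        _ = R ^ (q + 1) := by rw [pow_succ]; ring
        _ ≤ R ^ p := pow_le_pow_right₀ hR1 (by omega)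
    exact le_of_pow_le_pow_left₀ hpne (by linarith) h8
  have hmono : ∀ n, T (n + 1) ⊆ T n := by
    intro n
    induction n with
    | zero => exact hT10
    | succ n ih =>
      rw [hTsucc, hTsucc]
      rintro z ⟨w, hw, hwq⟩
      exact ⟨w, ih hw, hwq⟩
  have hanti : Antitone T := antitone_nat_of_succ_le hmono
  -- filledJulia ⊆ ⋂ T
  have hsub1 : filledJulia p q c ⊆ ⋂ n, T n := by
    intro z hz
    obtain ⟨s, hs0, horb, hbd⟩ := hz
    have hstay' := hstay s horb hbd
    have hTn : ∀ n k, s k ∈ T n := by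
      intro n
      induction n with
      | zero => intro k; rw [hT0, mem_closedBall_zero_iff]; exact hstay' k
      | succ n ih =>
        intro k
        rw [hTsucc]
        exact ⟨s (k + 1), ih (k + 1), horb k⟩
    exact mem_iInter.mpr fun n => hs0 ▸ hTn n 0
  -- finiteness of the successor set
  have hfin : ∀ w : ℂ, {w' : ℂ | (w' - c) ^ q = w ^ p}.Finite := by
    intro w
    have hsub : {w' : ℂ | (w' - c) ^ q = w ^ p} ⊆
        (fun x => x + c) '' {x : ℂ | x ^ q = w ^ p} := by
      intro w' hw'
      exact ⟨w' - c, hw', by ring⟩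
    refine Set.Finite.subset (Set.Finite.image _ ?_) hsub
    have hne : (Polynomial.X ^ q - Polynomial.C (w ^ p) : Polynomial ℂ) ≠ 0 :=
      Polynomial.X_pow_sub_C_ne_zero (by omega) _
    have := Polynomial.finite_setOf_isRoot hne
    refine this.subset ?_
    intro x hx
    simp only [Set.mem_setOf_eq, Polynomial.IsRoot, Polynomial.eval_sub, Polynomial.eval_pow,
      Polynomial.eval_X, Polynomial.eval_C]
    rw [Set.mem_setOf_eq] at hx
    rw [hx, sub_self]
  -- every point of ⋂ T has a successor in ⋂ T
  have hstep : ∀ w ∈ ⋂ n, T n, ∃ w', w' ∈ (⋂ n, T n) ∧ (w' - c) ^ q = w ^ p := by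
    intro w hw
    by_contra hno
    push_neg at hno
    set F := {w' : ℂ | (w' - c) ^ q = w ^ p} with hF
    have hFn : ∀ n, (F ∩ T n).Nonempty := by
      intro n
      have hw1 := mem_iInter.mp hw (n + 1)
      rw [hTsucc] at hw1
      obtain ⟨w', hw'T, hw'q⟩ := hw1
      exact ⟨w', hw'q, hw'T⟩
    have hdir : Directed (· ⊇ ·) (fun n => F ∩ T n) := fun i j =>
      ⟨max i j, Set.inter_subset_inter_right _ (hanti (le_max_left i j)),
        Set.inter_subset_inter_right _ (hanti (le_max_right i j))⟩
    obtain ⟨w', hw'⟩ := IsCompact.nonempty_iInter_of_directed_nonempty_isCompact_isClosed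
      _ hdir hFn (fun n => ((hfin w).inter_of_left _).isCompact)
      (fun n => ((hfin w).inter_of_left _).isClosed)
    simp only [mem_iInter, Set.mem_inter_iff] at hw'
    exact hno w' (mem_iInter.mpr fun n => (hw' n).2) (hw' 0).1
  -- ⋂ T ⊆ filledJulia
  have hsub2 : (⋂ n, T n) ⊆ filledJulia p q c := by
    intro z hz
    let Knext : {w : ℂ // w ∈ ⋂ n, T n} → {w : ℂ // w ∈ ⋂ n, T n} := fun x =>
      ⟨Classical.choose (hstep x.1 x.2), (Classical.choose_spec (hstep x.1 x.2)).1⟩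
    let o : ℕ → {w : ℂ // w ∈ ⋂ n, T n} := fun n => Knext^[n] ⟨z, hz⟩
    refine ⟨fun n => (o n).1, rfl, ?_, ?_⟩
    · intro n
      have ho : o (n + 1) = Knext (o n) := Function.iterate_succ_apply' Knext n _
      show ((o (n + 1)).1 - c) ^ q = ((o n).1) ^ p
      rw [ho]
      exact (Classical.choose_spec (hstep (o n).1 (o n).2)).2
    · apply Bornology.IsBounded.subset (Metric.isBounded_closedBall (x := (0:ℂ)) (r := R))
      rintro x ⟨n, rfl⟩
      have hm := mem_iInter.mp (o n).2 0
      rwa [hT0] at hm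
  have h0' := h0
  obtain ⟨s0, hs00, hs0orb, hs0bd⟩ := h0
  -- c belongs to the filled Julia set
  have hcJ : c ∈ filledJulia p q c := by
    have h1 : (s0 1 - c) ^ q = 0 := by
      have := hs0orb 0
      rw [hs00, zero_pow hpne] at this
      exact this
    have h2 : s0 1 = c := sub_eq_zero.mp ((pow_eq_zero_iff hqne).mp h1)
    refine ⟨fun n => s0 (n + 1), h2, fun n => hs0orb (n + 1), ?_⟩
    apply hs0bd.subset
    rintro x ⟨n, rfl⟩
    exact ⟨n + 1, rfl⟩
  have hcT : ∀ n, c ∈ T n := fun n => mem_iInter.mp (hsub1 hcJ) n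
  -- each T n is compact and connected
  have hTcc : ∀ n, IsCompact (T n) ∧ IsConnected (T n) := by
    intro n
    induction n with
    | zero =>
      rw [hT0]
      refine ⟨isCompact_closedBall _ _, ⟨0, ?_⟩, (convex_closedBall (0:ℂ) R).isPreconnected⟩
      rw [mem_closedBall_zero_iff]
      simp
      linarith
    | succ n ih =>
      rw [hTsucc]
      set Sn := (fun w => (w - c) ^ q) '' T n with hSn
      have hcontq : Continuous fun w : ℂ => (w - c) ^ q :=
        ((continuous_id.sub continuous_const).pow q)
      have hScomp : IsCompact Sn := ih.1.image hcontq
      have hScon : IsPreconnected Sn :=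
        (ih.2.image _ hcontq.continuousOn).isPreconnected
      have h0S : (0:ℂ) ∈ Sn := ⟨c, hcT n, by simp [sub_self, zero_pow hqne]⟩
      exact ⟨aux_pow_preimage_isCompact p hpne Sn hScomp,
        aux_pow_preimage_isConnected p hpne Sn hScomp hScon h0S⟩
  have hJ : filledJulia p q c = ⋂ n, T n := Set.Subset.antisymm hsub1 hsub2
  rw [hJ]
  exact ⟨⟨0, hsub1 h0'⟩,
    aux_iInter_preconnected T (fun n => (hTcc n).1)
      (fun n => (hTcc n).2.isPreconnected) hanti⟩
end

section
/- Let d ≥ 2 be an integer and let a ∈ ℂ satisfy a^{d−1} = −1. Consider the holomorphic correspondence defined by (w − a)² = z^{2d}, i.e., z ↦ {z^d + a, −z^d + a}. Then a forward orbit (z_n)_{n≥0} of this correspondence with z₀ = 0 is bounded if and only if z_n = 0 for all even n and z_n = a for all odd n; in other words, the only bounded forward orbit of 0 is the 2-cycle 0 ↦ a ↦ 0, so a is a simple center of this family. -/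
/-!
Since `a ^ d = -a` and `|a| = 1`, the two images of `0` are both `a`, and the two images of `a`
are `0` and `2a`. Once an orbit reaches a point of modulus at least `2`, the estimate
`|z_{n+1}| ≥ |z_n| ^ d - 1 ≥ |z_n| + 1` makes it escape to infinity. So a bounded orbit of `0`
never takes the branch `a ↦ 2a`, and is forced to alternate between `0` and `a`.
-/

open Bornology Set

lemma add_le_of_forall_add_one_le {x : ℕ → ℝ} {m : ℕ}
    (hstep : ∀ n, 2 ≤ x n → x n + 1 ≤ x (n + 1)) (hm : 2 ≤ x m) :
    ∀ k : ℕ, x m + k ≤ x (m + k)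
  | 0 => by simp
  | k + 1 => by
    have ih := add_le_of_forall_add_one_le hstep hm k
    have := hstep (m + k) (by linarith [k.cast_nonneg (α := ℝ)])
    rw [← add_assoc]
    push_cast
    linarith

lemma not_bddAbove_range_of_forall_add_one_le {x : ℕ → ℝ} {m : ℕ}
    (hstep : ∀ n, 2 ≤ x n → x n + 1 ≤ x (n + 1)) (hm : 2 ≤ x m) :
    ¬ BddAbove (range x) := by
  rintro ⟨C, hC⟩
  obtain ⟨k, hk⟩ := exists_nat_gt (C - x m)
  have := hC ⟨m + k, rfl⟩
  linarith [add_le_of_forall_add_one_le hstep hm k]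

section NormedDivisionRing

variable {𝕜 : Type*} [NormedDivisionRing 𝕜]

lemma norm_eq_one_of_pow_eq_neg_one {a : 𝕜} {n : ℕ} (hn : n ≠ 0) (ha : a ^ n = -1) :
    ‖a‖ = 1 :=
  (pow_eq_one_iff_of_nonneg (norm_nonneg a) hn).1 (by rw [← norm_pow, ha, norm_neg, norm_one])

def IsForwardOrbit (d : ℕ) (c : 𝕜) (z : ℕ → 𝕜) : Prop :=
  ∀ n, z (n + 1) = z n ^ d + c ∨ z (n + 1) = -z n ^ d + c

namespace IsForwardOrbit

variable {d : ℕ} {c : 𝕜} {z : ℕ → 𝕜}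

lemma succ_eq_of_eq_zero (h : IsForwardOrbit d c z) (hd : d ≠ 0) {n : ℕ} (hz : z n = 0) :
    z (n + 1) = c := by
  rcases h n with h | h <;> simp [h, hz, hd]

lemma succ_eq_zero_or_eq_two_mul (h : IsForwardOrbit d c z) (hc : c ^ d = -c) {n : ℕ}
    (hz : z n = c) : z (n + 1) = 0 ∨ z (n + 1) = 2 * c := by
  rcases h n with h | h
  · left; rw [h, hz, hc, neg_add_cancel]
  · right; rw [h, hz, hc, neg_neg, two_mul]

lemma norm_pow_sub_norm_le (h : IsForwardOrbit d c z) (n : ℕ) :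
    ‖z n‖ ^ d - ‖c‖ ≤ ‖z (n + 1)‖ := by
  have hpow : ‖z n‖ ^ d = ‖z (n + 1) - c‖ := by
    rcases h n with h | h <;> simp [h, norm_pow]
  linarith [norm_sub_le (z (n + 1)) c]

lemma not_isBounded_range (h : IsForwardOrbit d c z) (hd : 2 ≤ d) (hc : ‖c‖ ≤ 1) {m : ℕ}
    (hm : 2 ≤ ‖z m‖) : ¬ IsBounded (range z) := by
  intro hb
  obtain ⟨C, hC⟩ := isBounded_iff_forall_norm_le.1 hb
  refine not_bddAbove_range_of_forall_add_one_le (x := fun n ↦ ‖z n‖) (fun n hn ↦ ?_) hm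
    ⟨C, forall_mem_range.2 fun n ↦ hC _ (mem_range_self n)⟩
  have hsq : ‖z n‖ ^ 2 ≤ ‖z n‖ ^ d := pow_le_pow_right₀ (by linarith) hd
  nlinarith [h.norm_pow_sub_norm_le n]

end IsForwardOrbit

end NormedDivisionRing

lemma IsForwardOrbit.eq_zero_and_eq_of_isBounded {𝕜 : Type*} [RCLike 𝕜] {d : ℕ} {c : 𝕜}
    {z : ℕ → 𝕜} (h : IsForwardOrbit d c z) (hd : 2 ≤ d)
    (hc : c ^ (d - 1) = -1) (h0 : z 0 = 0) (hb : IsBounded (range z)) :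
    ∀ k, z (2 * k) = 0 ∧ z (2 * k + 1) = c := by
  have hnorm : ‖c‖ = 1 := norm_eq_one_of_pow_eq_neg_one (by omega) hc
  have hcd : c ^ d = -c := by
    rw [← Nat.sub_add_cancel (by omega : 1 ≤ d), pow_succ, hc, neg_one_mul]
  have hodd {k : ℕ} (hk : z (2 * k) = 0) : z (2 * k + 1) = c :=
    h.succ_eq_of_eq_zero (by omega) hk
  intro k
  induction k with
  | zero => exact ⟨h0, hodd h0⟩
  | succ k ih =>
    have heven : z (2 * (k + 1)) = 0 := by
      rcases h.succ_eq_zero_or_eq_two_mul hcd ih.2 with h2 | h2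
      · exact h2
      · refine absurd hb (h.not_isBounded_range hd hnorm.le (m := 2 * k + 1 + 1) ?_)
        rw [h2, norm_mul, hnorm, RCLike.norm_two, mul_one]
    exact ⟨heven, hodd heven⟩

/-- For `d ≥ 2` and `a` with `a^{d−1} = −1`, a forward orbit of the
correspondence `(w − a)² = z^{2d}`, i.e. `z ↦ {z^d + a, −z^d + a}`, starting at
`0` is bounded iff it is the 2-cycle `0 ↦ a ↦ 0`: the parameter `a` is a simple
center of the family `(w − c)² = z^{2d}`. -/
theorem simple_center (d : ℕ) (hd : 2 ≤ d) (a : ℂ) (ha : a ^ (d - 1) = -1)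
    (z : ℕ → ℂ) (h0 : z 0 = 0)
    (horb : ∀ n : ℕ, z (n + 1) = (z n) ^ d + a ∨ z (n + 1) = -(z n) ^ d + a) :
    Bornology.IsBounded (Set.range z) ↔
      ∀ n : ℕ, (Even n → z n = 0) ∧ (Odd n → z n = a) := by
  refine ⟨fun hb n ↦ ?_, fun hcycle ↦ ?_⟩
  · have hcyc := IsForwardOrbit.eq_zero_and_eq_of_isBounded horb hd ha h0 hb
    obtain ⟨k, rfl | rfl⟩ := Nat.even_or_odd' n
    · exact ⟨fun _ ↦ (hcyc k).1, fun ho ↦ absurd ho (Nat.not_odd_iff_even.2 (even_two_mul k))⟩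
    · exact ⟨fun he ↦ absurd he (Nat.not_even_iff_odd.2 (odd_two_mul_add_one k)),
        fun _ ↦ (hcyc k).2⟩
  · refine (toFinite {0, a}).isBounded.subset (range_subset_iff.2 fun n ↦ ?_)
    rcases Nat.even_or_odd n with he | ho
    · exact Or.inl ((hcycle n).1 he)
    · exact Or.inr ((hcycle n).2 ho)
end

section
/- Let p > q ≥ 1 be integers and take c = 0, so the correspondence is f₀ : z ↦ {w : w^q = z^p}. If z₀, …, z_{n−1} is a cycle of f₀ with z_i ≠ 0 for some i, then z_j ≠ 0 and |z_j| = 1 for all j, and the multiplier λ of the cycle satisfies |λ| = (p/q)^n > 1; in particular every cycle of f₀ not equal to the fixed point 0 is repelling, the only attracting cycle of f₀ is the fixed point 0, and the dual Julia set satisfies J₀* = {0}. -/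
open Finset

/-- `z 0, …, z (n−1)` is a cycle of length `n ≥ 1` of the correspondence
`f_c(z) = z^{p/q} + c`: `(z_{(i+1) mod n} − c)^q = z_i^p` for all `i < n`. -/
def IsCycle (p q : ℕ) (c : ℂ) (n : ℕ) (z : ℕ → ℂ) : Prop :=
  1 ≤ n ∧ ∀ i < n, (z ((i + 1) % n) - c) ^ q = (z i) ^ p

/-- The multiplier of a cycle: `∏ p·z_i^{p−1}/(q·(z_{(i+1) mod n} − c)^{q−1})`
if no point of the cycle is `0`, and `0` if the cycle contains `0`. -/
noncomputable def cycleMultiplier (p q : ℕ) (c : ℂ) (n : ℕ) (z : ℕ → ℂ) : ℂ :=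
  if ∀ i < n, z i ≠ 0 then
    ∏ i ∈ Finset.range n, (p * (z i) ^ (p - 1)) / (q * (z ((i + 1) % n) - c) ^ (q - 1))
  else 0

/-- The dual Julia set `J_c*`: the closure of the union of all attracting cycles. -/
noncomputable def dualJulia (p q : ℕ) (c : ℂ) : Set ℂ :=
  closure {w | ∃ (n : ℕ) (z : ℕ → ℂ) (i : ℕ), IsCycle p q c n z ∧
    ‖cycleMultiplier p q c n z‖ < 1 ∧ i < n ∧ w = z i}

/-!
Nonvanishing propagates forward along a cycle of `f₀`, so a cycle with one nonzero point
has no zero at all. Taking norms, `‖z_{i+1}‖ ^ q = ‖z_i‖ ^ p`; going once around the cycle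
gives `‖z_j‖ ^ (q ^ n) = ‖z_j‖ ^ (p ^ n)` with `q ^ n < p ^ n`, which forces `‖z_j‖ = 1`.
Every factor of the multiplier then has norm `p / q > 1`.
-/

theorem forall_of_cyclic_step {α : Type*} {n : ℕ} {z : ℕ → α} {P : α → Prop}
    (step : ∀ i < n, P (z i) → P (z ((i + 1) % n))) {j : ℕ} (hj : j < n) (hPj : P (z j)) :
    ∀ i < n, P (z i) := by
  have orbit : ∀ k, P (z ((j + k) % n)) := by
    intro k
    induction k with
    | zero => simpa [Nat.mod_eq_of_lt hj] using hPj
    | succ k ih =>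
      simpa only [Nat.mod_add_mod, add_assoc] using step _ (Nat.mod_lt _ (by omega)) ih
  intro i hi
  simpa [show j + (n - j + i) = i + n by omega, Nat.mod_eq_of_lt hi] using orbit (n - j + i)

namespace IsCycle

variable {p q n : ℕ} {z : ℕ → ℂ}

theorem forall_ne_zero (hz : IsCycle p q 0 n z) (hq : q ≠ 0) {j : ℕ} (hj : j < n)
    (hzj : z j ≠ 0) : ∀ i < n, z i ≠ 0 :=
  forall_of_cyclic_step (fun i hi hzi => ne_zero_pow hq <| by
    rw [← sub_zero (z _), hz.2 i hi]
    exact pow_ne_zero p hzi) hj hzj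

theorem norm_succ_pow (hz : IsCycle p q 0 n z) {i : ℕ} (hi : i < n) :
    ‖z ((i + 1) % n)‖ ^ q = ‖z i‖ ^ p := by
  rw [← norm_pow, ← norm_pow, ← hz.2 i hi, sub_zero]

theorem norm_pow_pow_iterate (hz : IsCycle p q 0 n z) {j : ℕ} (hj : j < n) (k : ℕ) :
    ‖z ((j + k) % n)‖ ^ (q ^ k) = ‖z j‖ ^ (p ^ k) := by
  induction k with
  | zero => simp [Nat.mod_eq_of_lt hj]
  | succ k ih =>
    have hstep := hz.norm_succ_pow (Nat.mod_lt (j + k) (by omega))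
    rw [Nat.mod_add_mod] at hstep
    rw [← add_assoc]
    calc ‖z ((j + k + 1) % n)‖ ^ (q ^ (k + 1))
        = (‖z ((j + k + 1) % n)‖ ^ q) ^ (q ^ k) := by rw [← pow_mul, pow_succ']
      _ = (‖z ((j + k) % n)‖ ^ (q ^ k)) ^ p := by rw [hstep, ← pow_mul, ← pow_mul, mul_comm]
      _ = ‖z j‖ ^ (p ^ (k + 1)) := by rw [ih, ← pow_mul, pow_succ]

theorem norm_eq_one (hz : IsCycle p q 0 n z) (hpq : q < p) {j : ℕ} (hj : j < n)
    (hzj : z j ≠ 0) : ‖z j‖ = 1 := by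
  have hround := hz.norm_pow_pow_iterate hj n
  rw [Nat.add_mod_right, Nat.mod_eq_of_lt hj] at hround
  by_contra hne
  exact (Nat.pow_lt_pow_left hpq (by omega)).ne
    ((pow_right_injective₀ (norm_pos_iff.mpr hzj) hne) hround)

theorem norm_cycleMultiplier (hz : IsCycle p q 0 n z) (hq : q ≠ 0) (hpq : q < p)
    {j : ℕ} (hj : j < n) (hzj : z j ≠ 0) : ‖cycleMultiplier p q 0 n z‖ = ((p : ℝ) / q) ^ n := by
  have hne := hz.forall_ne_zero hq hj hzj
  have hfactor : ∀ i ∈ range n,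
      ‖(p : ℂ) * z i ^ (p - 1) / ((q : ℂ) * (z ((i + 1) % n) - 0) ^ (q - 1))‖ = (p : ℝ) / q := by
    intro i hi
    rw [mem_range] at hi
    simp only [sub_zero, norm_div, norm_mul, norm_pow, Complex.norm_natCast,
      hz.norm_eq_one hpq hi (hne i hi),
      hz.norm_eq_one hpq (Nat.mod_lt _ (by omega)) (hne _ (Nat.mod_lt _ (by omega))),
      one_pow, mul_one]
  rw [cycleMultiplier, if_pos hne, norm_prod, prod_congr rfl hfactor, prod_const, card_range]

theorem one_lt_norm_cycleMultiplier (hz : IsCycle p q 0 n z) (hq : q ≠ 0) (hpq : q < p)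
    {j : ℕ} (hj : j < n) (hzj : z j ≠ 0) : 1 < ‖cycleMultiplier p q 0 n z‖ := by
  rw [hz.norm_cycleMultiplier hq hpq hj hzj]
  exact one_lt_pow₀ ((one_lt_div (by positivity)).mpr (by exact_mod_cast hpq)) (by omega)

theorem eq_zero_of_norm_cycleMultiplier_lt_one (hz : IsCycle p q 0 n z) (hq : q ≠ 0)
    (hpq : q < p) (hattr : ‖cycleMultiplier p q 0 n z‖ < 1) : ∀ i < n, z i = 0 :=
  fun _ hi => by_contra fun hzi => (hz.one_lt_norm_cycleMultiplier hq hpq hi hzi).not_gt hattr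

end IsCycle

theorem isCycle_const_zero {p q : ℕ} (hp : p ≠ 0) (hq : q ≠ 0) : IsCycle p q 0 1 fun _ => 0 :=
  ⟨le_rfl, fun _ _ => by rw [sub_zero, zero_pow hq, zero_pow hp]⟩

theorem cycleMultiplier_const_zero (p q : ℕ) : cycleMultiplier p q 0 1 (fun _ => 0) = 0 :=
  if_neg (by simp)

theorem dualJulia_zero {p q : ℕ} (hq : q ≠ 0) (hpq : q < p) : dualJulia p q 0 = {0} := by
  rw [dualJulia, ← closure_singleton]
  congr 1
  ext w
  simp only [Set.mem_ofPred_eq, Set.mem_singleton_iff]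
  constructor
  · rintro ⟨n, z, i, hz, hattr, hi, rfl⟩
    exact hz.eq_zero_of_norm_cycleMultiplier_lt_one hq hpq hattr i hi
  · rintro rfl
    exact ⟨1, _, 0, isCycle_const_zero (by omega) hq,
      by simp [cycleMultiplier_const_zero], one_pos, rfl⟩

/-- At `c = 0`: every cycle of `f₀ : z ↦ {w : w^q = z^p}` containing a nonzero
point lies on the unit circle and has multiplier of modulus `(p/q)^n > 1`, hence
is repelling; the only attracting cycle is the fixed point `0`, and `J₀* = {0}`. -/
theorem cycles_at_zero (p q : ℕ) (hq : 1 ≤ q) (hpq : q < p) :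
    (∀ (n : ℕ) (z : ℕ → ℂ), IsCycle p q 0 n z → (∃ i < n, z i ≠ 0) →
      (∀ j < n, z j ≠ 0 ∧ ‖z j‖ = 1) ∧
      ‖cycleMultiplier p q 0 n z‖ = ((p : ℝ) / q) ^ n ∧
      1 < ‖cycleMultiplier p q 0 n z‖) ∧
    (∀ (n : ℕ) (z : ℕ → ℂ), IsCycle p q 0 n z →
      ‖cycleMultiplier p q 0 n z‖ < 1 → ∀ i < n, z i = 0) ∧
    dualJulia p q 0 = {0} := by
  have hq0 : q ≠ 0 := by omega
  refine ⟨fun n z hz ⟨i, hi, hzi⟩ => ?_,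
    fun n z hz => hz.eq_zero_of_norm_cycleMultiplier_lt_one hq0 hpq, dualJulia_zero hq0 hpq⟩
  have hne := hz.forall_ne_zero hq0 hi hzi
  exact ⟨fun j hj => ⟨hne j hj, hz.norm_eq_one hpq hj (hne j hj)⟩,
    hz.norm_cycleMultiplier hq0 hpq hi hzi, hz.one_lt_norm_cycleMultiplier hq0 hpq hi hzi⟩
end

section
/- Let p > q ≥ 1 be coprime integers and take c = 0, so the correspondence is f₀ : z ↦ {w : w^q = z^p}. Then the Julia set J₀, defined as the closure of the union of all repelling cycles of f₀, is exactly the unit circle {z ∈ ℂ : |z| = 1}. -/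
open Finset

/-- The Julia set `J_c`: the closure of the union of all repelling cycles. -/
noncomputable def juliaSet (p q : ℕ) (c : ℂ) : Set ℂ :=
  closure {w | ∃ (n : ℕ) (z : ℕ → ℂ) (i : ℕ), IsCycle p q c n z ∧
    1 < ‖cycleMultiplier p q c n z‖ ∧ i < n ∧ w = z i}

/-! If no point of a cycle of `f₀` is `0`, then `‖z_{i+1}‖^q = ‖z_i‖^p`, so `|log ‖z_i‖|` is
multiplied by `p/q > 1` at each step; along a cycle this forces `‖z_i‖ = 1`. Conversely, let
`u^M = 1` with `M = p^n - q^n`. Since `q` is invertible modulo `M`, say `q s ≡ 1`, the points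
`z_i = u^{(ps)^i}` form a cycle of length `n` through `u`, because `(ps)^n ≡ (qs)^n ≡ 1 (mod M)`.
It lies on the unit circle, so its multiplier has modulus `(p/q)^n > 1`. As `n` grows, `M → ∞`
and the `M`-th roots of unity fill the circle. -/

open Complex Real

lemma eq_zero_of_mul_mod_succ_eq {p q : ℝ} (hq : 0 ≤ q) (hqp : q < p) {n : ℕ} {a : ℕ → ℝ}
    (ha : ∀ i < n, 0 ≤ a i) (h : ∀ i < n, q * a ((i + 1) % n) = p * a i) :
    ∀ i < n, a i = 0 := by
  rcases Nat.eq_zero_or_pos n with rfl | hn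
  · simp
  obtain ⟨i₀, hi₀, hmax⟩ := Finset.exists_max_image (Finset.range n) a ⟨0, Finset.mem_range.2 hn⟩
  rw [Finset.mem_range] at hi₀
  have hnext := hmax _ (Finset.mem_range.2 (Nat.mod_lt (i₀ + 1) hn))
  have hmax_nonpos : a i₀ ≤ 0 := by nlinarith [h i₀ hi₀, ha i₀ hi₀]
  intro i hi
  exact le_antisymm ((hmax i (Finset.mem_range.2 hi)).trans hmax_nonpos) (ha i hi)

lemma ne_zero_of_one_lt_norm_cycleMultiplier {p q : ℕ} {c : ℂ} {n : ℕ} {z : ℕ → ℂ}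
    (h : 1 < ‖cycleMultiplier p q c n z‖) : ∀ i < n, z i ≠ 0 := by
  by_contra h0
  rw [cycleMultiplier, if_neg h0, norm_zero] at h
  exact zero_le_one.not_gt h

lemma IsCycle.norm_eq_one_s13 {p q n : ℕ} {z : ℕ → ℂ} (hqp : q < p) (hz : IsCycle p q 0 n z)
    (h0 : ∀ i < n, z i ≠ 0) : ∀ i < n, ‖z i‖ = 1 := by
  have hlog : ∀ i < n, (q : ℝ) * |Real.log ‖z ((i + 1) % n)‖| = p * |Real.log ‖z i‖| := by
    intro i hi
    simpa [norm_pow, Real.log_pow, abs_mul] using congrArg (fun w => |Real.log ‖w‖|) (hz.2 i hi)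
  intro i hi
  have := eq_zero_of_mul_mod_succ_eq (Nat.cast_nonneg q) (Nat.cast_lt.2 hqp)
    (a := fun i => |Real.log ‖z i‖|) (fun i _ => abs_nonneg _) hlog i hi
  exact Real.eq_one_of_pos_of_log_eq_zero (norm_pos_iff.2 (h0 i hi)) (abs_eq_zero.1 this)

lemma isCycle_of_step_of_return {p q : ℕ} {c : ℂ} {n : ℕ} {z : ℕ → ℂ} (hn : 1 ≤ n)
    (hz : ∀ i, (z (i + 1) - c) ^ q = z i ^ p) (hret : z n = z 0) : IsCycle p q c n z := by
  refine ⟨hn, fun i hi => ?_⟩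
  rcases Nat.lt_or_ge (i + 1) n with h | h
  · rw [Nat.mod_eq_of_lt h]
    exact hz i
  · obtain rfl : i + 1 = n := by omega
    rw [Nat.mod_self, ← hret]
    exact hz i

lemma exists_isCycle_pow_of_pow_eq_one {p q n : ℕ} (hcop : p.Coprime q) (hqp : q < p)
    (hn : 1 ≤ n) {u : ℂ} (hu : u ^ (p ^ n - q ^ n) = 1) :
    ∃ s : ℕ, IsCycle p q 0 n (fun i => u ^ ((p * s) ^ i)) := by
  set M := p ^ n - q ^ n
  have hle : q ^ n ≤ p ^ n := Nat.pow_le_pow_left hqp.le n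
  have hM : M ≠ 0 := Nat.sub_ne_zero_of_lt (Nat.pow_lt_pow_left hqp (by omega))
  have hcopM : q.Coprime M :=
    (Nat.coprime_pow_left_iff hn _ _).1 ((Nat.coprime_sub_self_right hle).2 (hcop.symm.pow n n))
  obtain ⟨s, -, hs⟩ := Nat.exists_mul_mod_eq_of_coprime 1 hcopM hM
  change q * s ≡ 1 [MOD M] at hs
  refine ⟨s, isCycle_of_step_of_return hn (fun i => ?_) ?_⟩
  · simp only [sub_zero, ← pow_mul]
    apply pow_eq_pow_of_modEq _ hu
    calc (p * s) ^ (i + 1) * q = (p * s) ^ i * p * (q * s) := by ring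
      _ ≡ (p * s) ^ i * p * 1 [MOD M] := Nat.ModEq.mul_left _ hs
      _ = (p * s) ^ i * p := mul_one _
  · simp only [pow_zero, pow_one]
    conv_rhs => rw [← pow_one u]
    apply pow_eq_pow_of_modEq _ hu
    calc (p * s) ^ n = p ^ n * s ^ n := mul_pow _ _ _
      _ ≡ q ^ n * s ^ n [MOD M] := (Nat.modEq_sub hle).mul_right _
      _ = (q * s) ^ n := (mul_pow _ _ _).symm
      _ ≡ 1 ^ n [MOD M] := hs.pow n
      _ = 1 := one_pow n

lemma norm_cycleMultiplier_of_norm_eq_one {p q n : ℕ} {z : ℕ → ℂ} (hz : ∀ i < n, ‖z i‖ = 1) :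
    ‖cycleMultiplier p q 0 n z‖ = ((p : ℝ) / q) ^ n := by
  have h0 : ∀ i < n, z i ≠ 0 := fun i hi => norm_ne_zero_iff.1 (by simp [hz i hi])
  rw [cycleMultiplier, if_pos h0, norm_prod]
  trans ∏ _ ∈ Finset.range n, (p : ℝ) / q
  · refine Finset.prod_congr rfl fun i hi => ?_
    rw [Finset.mem_range] at hi
    simp [hz i hi, hz _ (Nat.mod_lt _ (Nat.zero_lt_of_lt hi))]
  · rw [Finset.prod_const, Finset.card_range]

lemma exists_repelling_cycle_of_pow_eq_one {p q n : ℕ} (hq : 1 ≤ q) (hqp : q < p)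
    (hcop : p.Coprime q) (hn : 1 ≤ n) {u : ℂ} (hu : u ^ (p ^ n - q ^ n) = 1) :
    ∃ (m : ℕ) (z : ℕ → ℂ) (i : ℕ),
      IsCycle p q 0 m z ∧ 1 < ‖cycleMultiplier p q 0 m z‖ ∧ i < m ∧ u = z i := by
  obtain ⟨s, hcyc⟩ := exists_isCycle_pow_of_pow_eq_one hcop hqp hn hu
  have hM : p ^ n - q ^ n ≠ 0 := Nat.sub_ne_zero_of_lt (Nat.pow_lt_pow_left hqp (by omega))
  have hnorm : ∀ i, ‖u ^ ((p * s) ^ i)‖ = 1 := fun i => by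
    rw [norm_pow, norm_eq_one_of_pow_eq_one hu hM, one_pow]
  refine ⟨n, _, 0, hcyc, ?_, hn, by simp⟩
  rw [norm_cycleMultiplier_of_norm_eq_one fun i _ => hnorm i]
  exact one_lt_pow₀ ((one_lt_div (by positivity)).2 (by exact_mod_cast hqp)) (by omega)

lemma le_pow_sub_pow {p q : ℕ} (hq : 1 ≤ q) (hqp : q < p) (n : ℕ) : n ≤ p ^ n - q ^ n := by
  suffices q ^ n + n ≤ p ^ n by omega
  induction n with
  | zero => simp
  | succ k ih =>
    have : 1 ≤ q ^ k := Nat.one_le_pow _ _ hq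
    rw [pow_succ, pow_succ]
    nlinarith

lemma exists_pow_eq_one_norm_sub_le {w : ℂ} (hw : ‖w‖ = 1) {M : ℕ} (hM : M ≠ 0) :
    ∃ u : ℂ, u ^ M = 1 ∧ ‖w - u‖ ≤ 2 * π / M := by
  have hMpos : (0 : ℝ) < M := by positivity
  set k : ℤ := ⌊arg w * M / (2 * π)⌋
  set φ : ℝ := 2 * π * k / M
  have hφ : 0 ≤ arg w - φ ∧ arg w - φ ≤ 2 * π / M := by
    have h1 := Int.floor_le (arg w * M / (2 * π))
    have h2 := Int.lt_floor_add_one (arg w * M / (2 * π))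
    have hdiff : arg w - φ = 2 * π / M * (arg w * M / (2 * π) - k) := by
      simp only [φ]
      field_simp
    rw [hdiff]
    exact ⟨by positivity, mul_le_of_le_one_right (by positivity) (by linarith)⟩
  refine ⟨exp (I * φ), ?_, ?_⟩
  · rw [← Complex.exp_nat_mul, ← Complex.exp_int_mul_two_pi_mul_I k]
    congr 1
    push_cast [φ]
    field_simp
  · have hw' : w = exp (I * φ) * exp (I * ↑(arg w - φ)) := by
      calc w = exp (arg w * I) := by simpa [hw] using (norm_mul_exp_arg_mul_I w).symm
        _ = _ := by
          rw [← Complex.exp_add]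
          congr 1
          push_cast
          ring
    calc ‖w - exp (I * φ)‖ = ‖exp (I * ↑(arg w - φ)) - 1‖ := by
          conv_lhs => rw [hw', ← mul_sub_one]
          rw [norm_mul, norm_exp_I_mul_ofReal, one_mul]
      _ ≤ ‖arg w - φ‖ := norm_exp_I_mul_ofReal_sub_one_le
      _ ≤ 2 * π / M := by rw [Real.norm_of_nonneg hφ.1]; exact hφ.2

lemma unitCircle_subset_closure {S : Set ℂ}
    (hS : ∀ N : ℕ, ∃ M ≥ N, ∀ u : ℂ, u ^ M = 1 → u ∈ S) :
    {z : ℂ | ‖z‖ = 1} ⊆ closure S := by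
  intro w hw
  rw [Metric.mem_closure_iff]
  intro ε hε
  obtain ⟨N, hN⟩ := exists_nat_gt (2 * π / ε)
  obtain ⟨M, hMN, hMS⟩ := hS N
  have hM : (2 * π / ε : ℝ) < M := hN.trans_le (Nat.cast_le.2 hMN)
  have hMpos : (0 : ℝ) < M := (by positivity : (0 : ℝ) ≤ 2 * π / ε).trans_lt hM
  obtain ⟨u, hu, hwu⟩ := exists_pow_eq_one_norm_sub_le hw (Nat.cast_pos.1 hMpos).ne'
  refine ⟨u, hMS u hu, ?_⟩
  rw [dist_eq_norm]
  calc ‖w - u‖ ≤ 2 * π / M := hwu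
    _ < ε := by rw [div_lt_iff₀ hMpos]; linarith [(div_lt_iff₀ hε).1 hM]

/-- For coprime `p > q ≥ 1`, the Julia set of `f₀ : z ↦ {w : w^q = z^p}` is
exactly the unit circle. -/
theorem julia_at_zero_is_circle (p q : ℕ) (hq : 1 ≤ q) (hpq : q < p)
    (hcop : Nat.Coprime p q) :
    juliaSet p q 0 = {z : ℂ | ‖z‖ = 1} := by
  apply Set.Subset.antisymm
  · refine closure_minimal ?_ (isClosed_eq continuous_norm continuous_const)
    rintro w ⟨n, z, i, hcyc, hrep, hi, rfl⟩
    exact hcyc.norm_eq_one_s13 hpq (ne_zero_of_one_lt_norm_cycleMultiplier hrep) i hi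
  · refine unitCircle_subset_closure fun N => ⟨p ^ (N + 1) - q ^ (N + 1), ?_, fun u hu => ?_⟩
    · exact (Nat.le_succ N).trans (le_pow_sub_pow hq hpq _)
    · exact exists_repelling_cycle_of_pow_eq_one hq hpq hcop N.succ_pos hu
end
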